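/- arXiv:2307.05245 — 11 statements merged into one kernel-verified Lean document; each statement's English description precedes it below -/
import Mathlib

section
/- Let E be a Hausdorff locally convex topological vector space over ℂ containing a nonzero vector, equipped with an increasing sequence (B_N)_{N∈ℕ} of closed, absolutely convex, bounded subsets that is fundamental, and let (Z_n)_{n∈ℕ} be an inductive spectrum of Banach spaces. Then the pair (E,(Z_n)) satisfies condition (S) if and only if (E,(Z_n)) satisfies condition (WS) and (Z_n) satisfies condition (Q). -/
open Pointwise

/-- Scaling a `ℂ`-balanced set by a smaller nonnegative real gives a smaller set. -/
lemma smul_subset_of_balanced {E : Type*} [AddCommGroup E] [Module ℂ E] {s : Set E}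
    (hs : Balanced ℂ s) {a b : ℝ} (ha : 0 ≤ a) (hab : a ≤ b) : a • s ⊆ b • s := by
  rcases eq_or_lt_of_le (ha.trans hab) with hb | hb
  · have haz : a = 0 := le_antisymm (hab.trans hb.ge) ha
    rw [haz, ← hb]
  · rintro x ⟨u, hu, rfl⟩
    refine ⟨(a / b) • u, ?_, ?_⟩
    · have h1 : ‖((a / b : ℝ) : ℂ)‖ ≤ 1 := by
        rw [Complex.norm_real, Real.norm_eq_abs, abs_of_nonneg (div_nonneg ha hb.le)]
        exact (div_le_one hb).mpr hab
      have := hs _ h1 (Set.smul_mem_smul_set hu)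
      rwa [Complex.coe_smul] at this
    · show b • (a / b) • u = a • u
      rw [smul_smul]
      congr 1
      field_simp

/-- Condition (Q) for an inductive spectrum of Banach spaces `(Z n)` with composite
inclusion maps `j n m h : Z n →L[ℂ] Z m` for `h : n ≤ m`. -/
def SpectrumCondQ {Z : ℕ → Type*} [∀ n, NormedAddCommGroup (Z n)]
    [∀ n, NormedSpace ℂ (Z n)]
    (j : ∀ n m : ℕ, n ≤ m → (Z n →L[ℂ] Z m)) : Prop :=
  ∀ n : ℕ, ∃ m : ℕ, ∃ hnm : n ≤ m, ∀ k : ℕ, ∀ hmk : m ≤ k, ∀ ε : ℝ, 0 < ε →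
    ∃ C : ℝ, 0 < C ∧ ∀ z : Z n,
      ‖j n m hnm z‖ ≤ C * ‖j n k (hnm.trans hmk) z‖ + ε * ‖z‖

/-- Condition (S) for a pair `(E, (Z n))`, with respect to a fundamental increasing
sequence of bounded sets `B` in `E`. -/
def PairCondS {E : Type*} [AddCommGroup E] [Module ℂ E] (B : ℕ → Set E)
    {Z : ℕ → Type*} [∀ n, NormedAddCommGroup (Z n)] [∀ n, NormedSpace ℂ (Z n)]
    (j : ∀ n m : ℕ, n ≤ m → (Z n →L[ℂ] Z m)) : Prop :=
  ∀ n : ℕ, ∃ m : ℕ, ∃ hnm : n ≤ m, ∀ k : ℕ, ∀ hmk : m ≤ k, ∃ N : ℕ,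
    ∀ M : ℕ, N ≤ M → ∀ ε : ℝ, 0 < ε → ∃ K : ℕ, M ≤ K ∧ ∃ C : ℝ, 0 < C ∧
      ∀ z : Z n,
        ‖j n m hnm z‖ • B M ⊆
          (C * ‖j n k (hnm.trans hmk) z‖) • B K + (ε * ‖z‖) • B N

/-- Condition (WS) for a pair `(E, (Z n))`, with respect to a fundamental increasing
sequence of bounded sets `B` in `E`. -/
def PairCondWS {E : Type*} [AddCommGroup E] [Module ℂ E] (B : ℕ → Set E)
    {Z : ℕ → Type*} [∀ n, NormedAddCommGroup (Z n)] [∀ n, NormedSpace ℂ (Z n)]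
    (j : ∀ n m : ℕ, n ≤ m → (Z n →L[ℂ] Z m)) : Prop :=
  ∀ n : ℕ, ∃ m : ℕ, ∃ hnm : n ≤ m, ∀ k : ℕ, ∀ hmk : m ≤ k, ∃ N : ℕ,
    ∀ M : ℕ, N ≤ M → ∃ K : ℕ, M ≤ K ∧ ∃ C : ℝ, 0 < C ∧
      ∀ z : Z n,
        ‖j n m hnm z‖ • B M ⊆
          C • (‖j n k (hnm.trans hmk) z‖ • B K + ‖z‖ • B N)

/-- Proposition: `(E, (Z n))` satisfies (S) iff it satisfies (WS) and `(Z n)`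
satisfies (Q). -/
theorem stmt0 {E : Type*} [AddCommGroup E] [Module ℂ E] [TopologicalSpace E]
    [IsTopologicalAddGroup E] [ContinuousSMul ℂ E] [LocallyConvexSpace ℝ E] [T2Space E]
    (hE : ∃ x : E, x ≠ 0)
    (B : ℕ → Set E)
    (hBclosed : ∀ N, IsClosed (B N))
    (hBconvex : ∀ N, Convex ℝ (B N))
    (hBbalanced : ∀ N, Balanced ℂ (B N))
    (hBbounded : ∀ N, Bornology.IsVonNBounded ℂ (B N))
    (hBmono : Monotone B)
    (hBfund : ∀ S : Set E, Bornology.IsVonNBounded ℂ S → ∃ N, S ⊆ B N)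
    {Z : ℕ → Type*} [∀ n, NormedAddCommGroup (Z n)] [∀ n, NormedSpace ℂ (Z n)]
    [∀ n, CompleteSpace (Z n)]
    (j : ∀ n m : ℕ, n ≤ m → (Z n →L[ℂ] Z m))
    (hj_id : ∀ n, j n n le_rfl = ContinuousLinearMap.id ℂ (Z n))
    (hj_comp : ∀ n m k (hnm : n ≤ m) (hmk : m ≤ k) (z : Z n),
      j m k hmk (j n m hnm z) = j n k (hnm.trans hmk) z)
    (hj_inj : ∀ n m (hnm : n ≤ m), Function.Injective (j n m hnm)) :
    PairCondS B j ↔ (PairCondWS B j ∧ SpectrumCondQ j) := by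
  haveI : ContinuousSMul ℝ E := IsScalarTower.continuousSMul ℂ
  constructor
  · intro hS
    constructor
    · -- (S) ⇒ (WS)
      intro n
      obtain ⟨m, hnm, hS'⟩ := hS n
      refine ⟨m, hnm, fun k hmk => ?_⟩
      obtain ⟨N, hS''⟩ := hS' k hmk
      refine ⟨N, fun M hNM => ?_⟩
      obtain ⟨K, hMK, C, hC, hincl⟩ := hS'' M hNM 1 one_pos
      refine ⟨K, hMK, C + 1, by positivity, fun z => ?_⟩
      calc ‖j n m hnm z‖ • B M
          ⊆ (C * ‖j n k (hnm.trans hmk) z‖) • B K + (1 * ‖z‖) • B N := hincl z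
        _ ⊆ ((C + 1) * ‖j n k (hnm.trans hmk) z‖) • B K + ((C + 1) * ‖z‖) • B N := by
            refine Set.add_subset_add ?_ ?_
            · exact smul_subset_of_balanced (hBbalanced K)
                (by positivity)
                (mul_le_mul_of_nonneg_right (by linarith) (norm_nonneg _))
            · exact smul_subset_of_balanced (hBbalanced N)
                (by positivity)
                (mul_le_mul_of_nonneg_right (by linarith) (norm_nonneg _))
        _ = (C + 1) • (‖j n k (hnm.trans hmk) z‖ • B K + ‖z‖ • B N) := by
            rw [smul_add, mul_smul, mul_smul]
    · -- (S) ⇒ (Q)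
      intro n
      obtain ⟨m, hnm, hS'⟩ := hS n
      refine ⟨m, hnm, fun k hmk ε hε => ?_⟩
      obtain ⟨N, hS''⟩ := hS' k hmk
      obtain ⟨x, hx⟩ := hE
      obtain ⟨f, hf⟩ := SeparatingDual.exists_ne_zero (R := ℝ) hx
      set δ := |f x| with hδdef
      have hδ : 0 < δ := abs_pos.mpr hf
      obtain ⟨R₁, hR₁⟩ := (NormedSpace.isVonNBounded_iff' ℝ).mp
        (((hBbounded N).restrict_scalars ℝ).image f)
      set RN := max R₁ 0 with hRNdef
      have hRN0 : 0 ≤ RN := le_max_right _ _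
      have hRN : ∀ v ∈ B N, |f v| ≤ RN := by
        intro v hv
        refine le_trans ?_ (le_max_left _ _)
        simpa [Real.norm_eq_abs] using hR₁ _ ⟨v, hv, rfl⟩
      obtain ⟨N₀, hN₀⟩ := hBfund {x} (Bornology.isVonNBounded_singleton x)
      have hxM : x ∈ B (max N N₀) := hBmono (le_max_right N N₀) (hN₀ rfl)
      have hε₀ : 0 < ε * δ / (RN + 1) := by positivity
      obtain ⟨K, hMK, C₀, hC₀, hincl⟩ := hS'' (max N N₀) (le_max_left _ _) _ hε₀
      obtain ⟨R₂, hR₂⟩ := (NormedSpace.isVonNBounded_iff' ℝ).mp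
        (((hBbounded K).restrict_scalars ℝ).image f)
      set RK := max R₂ 0 with hRKdef
      have hRK0 : 0 ≤ RK := le_max_right _ _
      have hRK : ∀ v ∈ B K, |f v| ≤ RK := by
        intro v hv
        refine le_trans ?_ (le_max_left _ _)
        simpa [Real.norm_eq_abs] using hR₂ _ ⟨v, hv, rfl⟩
      refine ⟨(C₀ * RK + 1) / δ, by positivity, fun z => ?_⟩
      set s := ‖j n m hnm z‖ with hs
      set a := ‖j n k (hnm.trans hmk) z‖ with ha'
      set b := ‖z‖ with hb'
      have hs0 : 0 ≤ s := norm_nonneg _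
      have ha0 : 0 ≤ a := norm_nonneg _
      have hb0 : 0 ≤ b := norm_nonneg _
      have hmem : s • x ∈ (C₀ * a) • B K + (ε * δ / (RN + 1) * b) • B N :=
        hincl z (Set.smul_mem_smul_set hxM)
      rw [Set.mem_add] at hmem
      obtain ⟨y, hy, w, hw, hyw⟩ := hmem
      obtain ⟨u, hu, rfl⟩ := hy
      obtain ⟨v, hv, rfl⟩ := hw
      have key : s * δ ≤ C₀ * a * RK + ε * δ * b := by
        have hfeq : s * f x = (C₀ * a) * f u + (ε * δ / (RN + 1) * b) * f v := by
          have := congrArg f hyw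
          simpa [map_add, map_smul, mul_comm] using this.symm
        have h1 : s * δ = |s * f x| := by
          rw [abs_mul, abs_of_nonneg hs0]
        have hXu : |(C₀ * a) * f u| ≤ (C₀ * a) * RK := by
          rw [abs_mul, abs_of_nonneg (show (0:ℝ) ≤ C₀ * a by positivity)]
          exact mul_le_mul_of_nonneg_left (hRK u hu) (by positivity)
        have hYv : |(ε * δ / (RN + 1) * b) * f v| ≤ (ε * δ / (RN + 1) * b) * RN := by
          rw [abs_mul, abs_of_nonneg (show (0:ℝ) ≤ ε * δ / (RN + 1) * b by positivity)]
          exact mul_le_mul_of_nonneg_left (hRN v hv) (by positivity)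
        have h2 : |s * f x| ≤ (C₀ * a) * RK + (ε * δ / (RN + 1) * b) * RN := by
          rw [hfeq]
          exact (abs_add_le _ _).trans (add_le_add hXu hYv)
        have h3 : (ε * δ / (RN + 1) * b) * RN ≤ ε * δ * b := by
          rw [div_mul_eq_mul_div, div_mul_eq_mul_div, div_le_iff₀ (by positivity)]
          nlinarith [mul_nonneg (mul_nonneg hε.le hδ.le) hb0]
        linarith [h1 ▸ h2]
      have hCδ : (C₀ * RK + 1) / δ * δ = C₀ * RK + 1 := div_mul_cancel₀ _ hδ.ne'
      have final : s * δ ≤ ((C₀ * RK + 1) / δ * a + ε * b) * δ := by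
        have hCa : (C₀ * RK + 1) / δ * a * δ = (C₀ * RK + 1) * a := by
          rw [show (C₀ * RK + 1) / δ * a * δ = ((C₀ * RK + 1) / δ * δ) * a by ring, hCδ]
        nlinarith [key, ha0]
      exact le_of_mul_le_mul_right final hδ
  · -- (WS) ∧ (Q) ⇒ (S)
    rintro ⟨hWS, hQ⟩
    intro n
    obtain ⟨m₁, hnm₁, hQ'⟩ := hQ n
    obtain ⟨m, hm₁m, hWS'⟩ := hWS m₁
    refine ⟨m, hnm₁.trans hm₁m, fun k hmk => ?_⟩
    obtain ⟨N, hWS''⟩ := hWS' k hmk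
    refine ⟨N, fun M hNM ε hε => ?_⟩
    obtain ⟨K, hMK, Cw, hCw, hinclW⟩ := hWS'' M hNM
    obtain ⟨Cq, hCq, hQ''⟩ := hQ' k (hm₁m.trans hmk) (ε / Cw) (by positivity)
    refine ⟨K, hMK, Cw * (1 + Cq), by positivity, fun z => ?_⟩
    have hNK : N ≤ K := hNM.trans hMK
    have ha0 : (0:ℝ) ≤ ‖j n k ((hnm₁.trans hm₁m).trans hmk) z‖ := norm_nonneg _
    have base : ‖j n m (hnm₁.trans hm₁m) z‖ • B M ⊆
        Cw • (‖j n k ((hnm₁.trans hm₁m).trans hmk) z‖ • B K + ‖j n m₁ hnm₁ z‖ • B N) := by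
      have h := hinclW (j n m₁ hnm₁ z)
      rw [hj_comp n m₁ m hnm₁ hm₁m z, hj_comp n m₁ k hnm₁ (hm₁m.trans hmk) z] at h
      exact h
    have hq : ‖j n m₁ hnm₁ z‖ ≤
        Cq * ‖j n k ((hnm₁.trans hm₁m).trans hmk) z‖ + ε / Cw * ‖z‖ := hQ'' z
    calc ‖j n m (hnm₁.trans hm₁m) z‖ • B M
        ⊆ Cw • (‖j n k ((hnm₁.trans hm₁m).trans hmk) z‖ • B K + ‖j n m₁ hnm₁ z‖ • B N) := base
      _ ⊆ Cw • (‖j n k ((hnm₁.trans hm₁m).trans hmk) z‖ • B K +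
            (Cq * ‖j n k ((hnm₁.trans hm₁m).trans hmk) z‖ + ε / Cw * ‖z‖) • B N) :=
          Set.smul_set_mono (Set.add_subset_add subset_rfl
            (smul_subset_of_balanced (hBbalanced N) (norm_nonneg _) hq))
      _ ⊆ Cw • (‖j n k ((hnm₁.trans hm₁m).trans hmk) z‖ • B K +
            ((Cq * ‖j n k ((hnm₁.trans hm₁m).trans hmk) z‖) • B N + (ε / Cw * ‖z‖) • B N)) :=
          Set.smul_set_mono (Set.add_subset_add subset_rfl (Set.add_smul_subset _ _ _))
      _ ⊆ Cw • ((‖j n k ((hnm₁.trans hm₁m).trans hmk) z‖ • B K +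
            (Cq * ‖j n k ((hnm₁.trans hm₁m).trans hmk) z‖) • B K) + (ε / Cw * ‖z‖) • B N) := by
          refine Set.smul_set_mono ?_
          rw [← add_assoc]
          refine Set.add_subset_add (Set.add_subset_add subset_rfl ?_) subset_rfl
          exact Set.smul_set_mono (hBmono hNK)
      _ = Cw • (((1 + Cq) * ‖j n k ((hnm₁.trans hm₁m).trans hmk) z‖) • B K +
            (ε / Cw * ‖z‖) • B N) := by
          rw [show (1 + Cq) * ‖j n k ((hnm₁.trans hm₁m).trans hmk) z‖ =
            ‖j n k ((hnm₁.trans hm₁m).trans hmk) z‖ +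
              Cq * ‖j n k ((hnm₁.trans hm₁m).trans hmk) z‖ by ring,
            (hBconvex K).add_smul (norm_nonneg _) (by positivity)]
      _ = (Cw * (1 + Cq) * ‖j n k ((hnm₁.trans hm₁m).trans hmk) z‖) • B K + (ε * ‖z‖) • B N := by
          rw [smul_add, ← mul_smul, ← mul_smul,
            show Cw * (ε / Cw * ‖z‖) = ε * ‖z‖ by field_simp,
            mul_assoc]
end

section
/- Let E be a Hausdorff locally convex topological vector space over ℂ containing a nonzero vector, equipped with an increasing sequence (B_N)_{N∈ℕ} of closed, absolutely convex, bounded subsets that is fundamental, and let (Z_n)_{n∈ℕ} be an inductive spectrum of Banach spaces. Suppose E possesses a fundamental bounded set. Then the pair (E,(Z_n)) satisfies condition (S) if and only if (Z_n) satisfies condition (Q). -/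
open Pointwise

open Pointwise in
lemma balanced_smul_subset_aux {E : Type*} [AddCommGroup E] [Module ℂ E] {B : Set E}
    (hB : Balanced ℂ B) {s t : ℝ} (hs : 0 ≤ s) (hst : s ≤ t) : s • B ⊆ t • B := by
  rcases eq_or_lt_of_le (hs.trans hst) with ht | ht
  · have : s = 0 := le_antisymm (hst.trans ht.symm.le) hs
    rw [this, ← ht]
  · rintro x ⟨y, hy, rfl⟩
    have hmem : (s / t : ℝ) • y ∈ B := by
      have : ((s / t : ℝ) : ℂ) • y ∈ B := by
        apply hB ((s / t : ℝ) : ℂ) ?_ (Set.smul_mem_smul_set hy)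
        rw [Complex.norm_real, Real.norm_eq_abs, abs_of_nonneg (div_nonneg hs ht.le)]
        exact div_le_one_of_le₀ hst ht.le
      exact this
    refine ⟨(s / t : ℝ) • y, hmem, ?_⟩
    show t • (s / t) • y = s • y
    rw [smul_smul]
    congr 1
    field_simp

open Pointwise in
lemma add_smul_set_subset_aux {E : Type*} [AddCommGroup E] [Module ℂ E] {B : Set E}
    (a b : ℝ) : (a + b) • B ⊆ a • B + b • B := by
  rintro x ⟨y, hy, rfl⟩
  show (a + b) • y ∈ a • B + b • B
  rw [add_smul]
  exact Set.add_mem_add (Set.smul_mem_smul_set hy) (Set.smul_mem_smul_set hy)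

/-- If E has a fundamental bounded set, then (E, (Z n)) satisfies (S)
iff (Z n) satisfies (Q). -/
theorem stmt1 {E : Type*} [AddCommGroup E] [Module ℂ E] [TopologicalSpace E]
    [IsTopologicalAddGroup E] [ContinuousSMul ℂ E] [LocallyConvexSpace ℝ E] [T2Space E]
    (hE : ∃ x : E, x ≠ 0)
    (B : ℕ → Set E)
    (hBclosed : ∀ N, IsClosed (B N))
    (hBconvex : ∀ N, Convex ℝ (B N))
    (hBbalanced : ∀ N, Balanced ℂ (B N))
    (hBbounded : ∀ N, Bornology.IsVonNBounded ℂ (B N))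
    (hBmono : Monotone B)
    (hBfund : ∀ S : Set E, Bornology.IsVonNBounded ℂ S → ∃ N, S ⊆ B N)
    (hfund_bdd : ∃ B₀ : Set E, Bornology.IsVonNBounded ℂ B₀ ∧
      ∀ S : Set E, Bornology.IsVonNBounded ℂ S → ∃ C : ℝ, 0 < C ∧ S ⊆ C • B₀)
    {Z : ℕ → Type*} [∀ n, NormedAddCommGroup (Z n)] [∀ n, NormedSpace ℂ (Z n)]
    [∀ n, CompleteSpace (Z n)]
    (j : ∀ n m : ℕ, n ≤ m → (Z n →L[ℂ] Z m))
    (hj_id : ∀ n, j n n le_rfl = ContinuousLinearMap.id ℂ (Z n))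
    (hj_comp : ∀ n m k (hnm : n ≤ m) (hmk : m ≤ k) (z : Z n),
      j m k hmk (j n m hnm z) = j n k (hnm.trans hmk) z)
    (hj_inj : ∀ n m (hnm : n ≤ m), Function.Injective (j n m hnm)) :
    PairCondS B j ↔ SpectrumCondQ j := by
  haveI : ContinuousSMul ℝ E := by
    constructor
    exact (continuous_smul (M := ℂ) (X := E)).comp
      (by continuity : Continuous fun p : ℝ × E => ((p.1 : ℂ), p.2))
  haveI : SeparatingDual ℝ E := inferInstance
  have hb : ∀ (f : E →L[ℝ] ℝ) (N : ℕ), ∃ D : ℝ, 1 ≤ D ∧ ∀ y ∈ B N, |f y| ≤ D := by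
    intro f N
    have h1 : Bornology.IsVonNBounded ℝ (B N) := (hBbounded N).restrict_scalars ℝ
    have h3 : Bornology.IsBounded (f '' B N) :=
      (NormedSpace.isVonNBounded_iff ℝ).mp (h1.image f)
    obtain ⟨D, hD⟩ := h3.exists_norm_le
    exact ⟨max D 1, le_max_right _ _, fun y hy => le_trans (hD _ ⟨y, hy, rfl⟩) (le_max_left _ _)⟩
  constructor
  · -- (S) → (Q)
    intro hS n
    obtain ⟨m, hnm, hSm⟩ := hS n
    refine ⟨m, hnm, ?_⟩
    intro k hmk ε hε
    obtain ⟨N, hN⟩ := hSm k hmk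
    obtain ⟨x, hx⟩ := hE
    obtain ⟨N₁, hN₁⟩ := hBfund {x} (Bornology.isVonNBounded_singleton x)
    set M := max N N₁ with hM
    have hxM : x ∈ B M := hBmono (le_max_right N N₁) (hN₁ rfl)
    obtain ⟨f, hfx⟩ := SeparatingDual.exists_eq_one (R := ℝ) hx
    obtain ⟨DN, hDN1, hDN⟩ := hb f N
    have hDNpos : (0:ℝ) < DN := lt_of_lt_of_le one_pos hDN1
    obtain ⟨K, hMK, C, hC, hsub⟩ := hN M (le_max_left N N₁) (ε / DN) (div_pos hε hDNpos)
    obtain ⟨DK, hDK1, hDK⟩ := hb f K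
    have hDKpos : (0:ℝ) < DK := lt_of_lt_of_le one_pos hDK1
    refine ⟨C * DK, mul_pos hC hDKpos, fun z => ?_⟩
    have hmemS : (‖j n m hnm z‖ : ℝ) • x ∈
        (C * ‖j n k (hnm.trans hmk) z‖) • B K + (ε / DN * ‖z‖) • B N :=
      hsub z (Set.smul_mem_smul_set hxM)
    obtain ⟨u, hu, v, hv, huv⟩ := hmemS
    obtain ⟨a, ha, rfl⟩ := hu
    obtain ⟨b, hbmem, rfl⟩ := hv
    have hfeq : ‖j n m hnm z‖ =
        (C * ‖j n k (hnm.trans hmk) z‖) * f a + (ε / DN * ‖z‖) * f b := by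
      have := congrArg f huv
      simpa [map_add, map_smul, hfx, smul_eq_mul] using this.symm
    have h1 : (C * ‖j n k (hnm.trans hmk) z‖) * f a ≤
        (C * ‖j n k (hnm.trans hmk) z‖) * DK := by
      apply mul_le_mul_of_nonneg_left (le_trans (le_abs_self _) (hDK a ha))
      positivity
    have h2 : (ε / DN * ‖z‖) * f b ≤ (ε / DN * ‖z‖) * DN := by
      apply mul_le_mul_of_nonneg_left (le_trans (le_abs_self _) (hDN b hbmem))
      positivity
    calc ‖j n m hnm z‖ = (C * ‖j n k (hnm.trans hmk) z‖) * f a + (ε / DN * ‖z‖) * f b :=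
          hfeq
      _ ≤ (C * ‖j n k (hnm.trans hmk) z‖) * DK + (ε / DN * ‖z‖) * DN :=
          add_le_add h1 h2
      _ = C * DK * ‖j n k (hnm.trans hmk) z‖ + ε * ‖z‖ := by
          field_simp
  · -- (Q) → (S)
    intro hQ n
    obtain ⟨m, hnm, hQm⟩ := hQ n
    refine ⟨m, hnm, ?_⟩
    intro k hmk
    obtain ⟨B₀, hB₀bdd, hB₀fund⟩ := hfund_bdd
    obtain ⟨N₀, hN₀⟩ := hBfund B₀ hB₀bdd
    refine ⟨N₀, ?_⟩
    intro M hM ε hε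
    obtain ⟨CM, hCM, hBMsub⟩ := hB₀fund (B M) (hBbounded M)
    have hBMsub' : B M ⊆ CM • B N₀ :=
      hBMsub.trans (Set.smul_set_mono hN₀)
    obtain ⟨C', hC', hineq⟩ := hQm k hmk (ε / CM) (div_pos hε hCM)
    refine ⟨max M N₀, le_max_left _ _, C' * CM, mul_pos hC' hCM, fun z => ?_⟩
    set a := C' * CM * ‖j n k (hnm.trans hmk) z‖ with ha
    set b := ε * ‖z‖ with hbdef
    have ha0 : 0 ≤ a := by positivity
    have hb0 : 0 ≤ b := by positivity
    calc ‖j n m hnm z‖ • B M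
        ⊆ ‖j n m hnm z‖ • (CM • B N₀) := Set.smul_set_mono hBMsub'
      _ = (‖j n m hnm z‖ * CM) • B N₀ := by rw [smul_smul]
      _ ⊆ (a + b) • B N₀ := by
          apply balanced_smul_subset_aux (hBbalanced N₀) (by positivity)
          calc ‖j n m hnm z‖ * CM
              ≤ (C' * ‖j n k (hnm.trans hmk) z‖ + ε / CM * ‖z‖) * CM :=
                mul_le_mul_of_nonneg_right (hineq z) hCM.le
            _ = a + b := by
                rw [ha, hbdef]
                field_simp
      _ ⊆ a • B N₀ + b • B N₀ := add_smul_set_subset_aux a b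
      _ ⊆ a • B (max M N₀) + b • B N₀ :=
          Set.add_subset_add_right (Set.smul_set_mono (hBmono (le_max_right M N₀)))
end

section
/- Let E be a Hausdorff locally convex topological vector space over ℂ equipped with an increasing sequence (B_N)_{N∈ℕ} of closed, absolutely convex, bounded subsets that is fundamental, and let (Z_n)_{n∈ℕ} be an inductive spectrum of Banach spaces. Suppose E does not possess a fundamental bounded set. Then the pair (E,(Z_n)) satisfies condition (S) if and only if (E,(Z_n)) satisfies condition (WS). -/
open Pointwise

open Topology Filter

section AuxLemmas

variable {E : Type*} [AddCommGroup E] [Module ℂ E]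

/-- A balanced set scaled by a smaller nonnegative real is contained in the
scaling by a larger one. -/
private lemma smul_mono_scalar {B : Set E} (hbal : Balanced ℂ B) {a b : ℝ}
    (ha : 0 ≤ a) (hab : a ≤ b) : a • B ⊆ b • B := by
  rintro x ⟨y, hy, rfl⟩
  by_cases hb : b = 0
  · have ha0 : a = 0 := le_antisymm (hab.trans hb.le) ha
    exact ⟨y, hy, by show b • y = a • y; rw [ha0, hb]⟩
  · have hbpos : 0 < b := lt_of_le_of_ne (ha.trans hab) (Ne.symm hb)
    refine ⟨(a / b) • y, ?_, ?_⟩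
    · have hnorm : ‖((a / b : ℝ) : ℂ)‖ ≤ 1 := by
        rw [Complex.norm_real, Real.norm_eq_abs, abs_of_nonneg (div_nonneg ha hbpos.le)]
        exact (div_le_one hbpos).mpr hab
      have := hbal ((a / b : ℝ) : ℂ) hnorm (Set.smul_mem_smul_set hy)
      rwa [Complex.coe_smul] at this
    · show b • ((a / b) • y) = a • y
      rw [smul_smul]
      congr 1
      field_simp

/-- Multiplying an element of a balanced set by a real scalar in `[0,1]` stays in the set. -/
private lemma balanced_mem {B : Set E} (hbal : Balanced ℂ B) {y : E} (hy : y ∈ B)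
    {a : ℝ} (ha0 : 0 ≤ a) (ha : a ≤ 1) : a • y ∈ B := by
  have hnorm : ‖((a : ℝ) : ℂ)‖ ≤ 1 := by
    rw [Complex.norm_real, Real.norm_eq_abs, abs_of_nonneg ha0]
    exact ha
  have := hbal ((a : ℝ) : ℂ) hnorm (Set.smul_mem_smul_set hy)
  rwa [Complex.coe_smul] at this

end AuxLemmas

/-- The key quantitative lemma: from a (wS)-type inclusion at a level `BM` that is not
absorbed by any multiple of `BN`, one deduces a condition-(Q)-type scalar estimate. -/
private lemma condQ_aux {E : Type*} [AddCommGroup E] [Module ℂ E] [TopologicalSpace E]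
    [IsTopologicalAddGroup E] [ContinuousSMul ℂ E]
    {α : Type*} (φ ψ ω : α → ℝ)
    (hψ : ∀ z, 0 ≤ ψ z) (hω : ∀ z, 0 ≤ ω z)
    {BM BK BN : Set E}
    (hBNclosed : IsClosed BN) (hBNbal : Balanced ℂ BN)
    (hBKbdd : Bornology.IsVonNBounded ℂ BK)
    {C₁ : ℝ} (hC₁ : 0 < C₁)
    (hincl : ∀ z, φ z • BM ⊆ C₁ • (ψ z • BK + ω z • BN))
    (hnot : ∀ c : ℝ, 0 < c → ¬ BM ⊆ c • BN)
    {η : ℝ} (hη : 0 < η) :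
    ∃ C₃ : ℝ, 0 < C₃ ∧ ∀ z, φ z ≤ C₃ * ψ z + η * ω z := by
  by_contra hcon
  push_neg at hcon
  refine hnot (C₁ / η) (by positivity) ?_
  intro x hx
  have hC₁' : C₁ ≠ 0 := ne_of_gt hC₁
  have hη' : η ≠ 0 := ne_of_gt hη
  set y := (η / C₁) • x with hydef
  have key : y ∈ BN := by
    have hyc : y ∈ closure BN := by
      rw [mem_closure_iff_nhds]
      intro U hU
      -- the preimage of `U` under `v ↦ y - v` is a neighbourhood of 0
      have hV : (fun v : E => y - v) ⁻¹' U ∈ 𝓝 (0 : E) := by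
        have hc : Continuous fun v : E => y - v := continuous_const.sub continuous_id
        have h0 : (fun v : E => y - v) 0 = y := by simp
        exact hc.continuousAt.preimage_mem_nhds (by simpa using hU)
      obtain ⟨W, ⟨hW0, hWbal⟩, hWsub⟩ := (nhds_basis_balanced ℂ E).mem_iff.1 hV
      obtain ⟨r, hr⟩ := absorbs_iff_norm.1 (hBKbdd hW0)
      set ρ : ℝ := max r 1 with hρdef
      have hρ1 : (1 : ℝ) ≤ ρ := le_max_right _ _
      have hρpos : 0 < ρ := lt_of_lt_of_le one_pos hρ1
      obtain ⟨i, hi⟩ := exists_nat_ge (η * ρ)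
      obtain ⟨z, hz⟩ := hcon ((i : ℝ) + 1) (by positivity)
      -- hz : ((i:ℝ)+1) * ψ z + η * ω z < φ z
      have hlpos : 0 < φ z :=
        lt_of_le_of_lt (add_nonneg (mul_nonneg (by positivity) (hψ z))
          (mul_nonneg hη.le (hω z))) hz
      have hl' : φ z ≠ 0 := ne_of_gt hlpos
      have hxmem : φ z • x ∈ φ z • BM := Set.smul_mem_smul_set hx
      obtain ⟨p, hp, hpx⟩ := Set.mem_smul_set.1 (hincl z hxmem)
      obtain ⟨u, hu, v, hv, huv⟩ := Set.mem_add.1 hp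
      obtain ⟨u₀, hu₀, hu₀e⟩ := Set.mem_smul_set.1 hu
      obtain ⟨v₀, hv₀, hv₀e⟩ := Set.mem_smul_set.1 hv
      -- hpx : C₁ • p = φ z • x, p = u + v, u = ψ z • u₀, v = ω z • v₀
      have hdec : C₁ • (ψ z • u₀ + ω z • v₀) = φ z • x := by
        rw [hu₀e, hv₀e, huv, hpx]
      -- divide: y = (η ψz / φz) • u₀ + (η ωz / φz) • v₀
      have hyeq : y = (η * ψ z / φ z) • u₀ + (η * ω z / φ z) • v₀ := by
        have h1 : (η / (C₁ * φ z)) • (C₁ • (ψ z • u₀ + ω z • v₀))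
            = (η / (C₁ * φ z)) • (φ z • x) := by rw [hdec]
        rw [smul_smul, smul_smul] at h1
        have e1 : η / (C₁ * φ z) * C₁ = η / φ z := by field_simp
        have e2 : η / (C₁ * φ z) * φ z = η / C₁ := by field_simp
        rw [e1, e2, smul_add, smul_smul, smul_smul] at h1
        have e3 : η / φ z * ψ z = η * ψ z / φ z := by ring
        have e4 : η / φ z * ω z = η * ω z / φ z := by ring
        rw [e3, e4] at h1
        rw [hydef, ← h1]
      -- the `BN` part
      have hnbmem : (η * ω z / φ z) • v₀ ∈ BN := by
        refine balanced_mem hBNbal hv₀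
          (div_nonneg (mul_nonneg hη.le (hω z)) hlpos.le) ?_
        rw [div_le_one hlpos]
        nlinarith [hψ z, hz, mul_nonneg (by positivity : (0:ℝ) ≤ (i : ℝ) + 1) (hψ z)]
      -- the `BK` part is small : it lies in `W`
      have hwmem : (η * ψ z / φ z) • u₀ ∈ W := by
        have hBKW : BK ⊆ ((ρ : ℝ) : ℂ) • W := by
          refine hr _ ?_
          rw [Complex.norm_real, Real.norm_eq_abs, abs_of_nonneg hρpos.le]
          exact le_max_left _ _
        obtain ⟨w₀, hw₀, hw₀e⟩ := Set.mem_smul_set.1 (hBKW hu₀)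
        have hcoef : ((η * ψ z / φ z : ℝ) : ℂ) * ((ρ : ℝ) : ℂ) = (((η * ψ z / φ z) * ρ : ℝ) : ℂ) := by
          push_cast; ring
        have heq : (η * ψ z / φ z) • u₀ = (((η * ψ z / φ z) * ρ : ℝ) : ℂ) • w₀ := by
          rw [← hw₀e, ← Complex.coe_smul, smul_smul, hcoef]
        rw [heq, Complex.coe_smul]
        refine balanced_mem hWbal hw₀
          (mul_nonneg (div_nonneg (mul_nonneg hη.le (hψ z)) hlpos.le) hρpos.le) ?_
        -- (η ψz/φz) * ρ ≤ 1
        rw [div_mul_eq_mul_div, div_le_one hlpos]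
        have h1 : η * ρ * ψ z ≤ ((i : ℝ) + 1) * ψ z := by
          have : η * ρ ≤ (i : ℝ) + 1 := hi.trans (by linarith)
          exact mul_le_mul_of_nonneg_right this (hψ z)
        nlinarith [mul_nonneg hη.le (hω z)]
      -- conclude : y - w ∈ U ∩ BN
      refine ⟨y - (η * ψ z / φ z) • u₀, hWsub hwmem, ?_⟩
      have : y - (η * ψ z / φ z) • u₀ = (η * ω z / φ z) • v₀ := by
        rw [hyeq]; abel
      rwa [this]
    rwa [hBNclosed.closure_eq] at hyc
  refine Set.mem_smul_set.2 ⟨y, key, ?_⟩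
  rw [hydef, smul_smul]
  have : C₁ / η * (η / C₁) = 1 := by field_simp
  rw [this, one_smul]

/-- If `E` has no fundamental bounded set, then above every index there is a level
which is not absorbed by the given one. -/
private lemma exists_bad_level {E : Type*} [AddCommGroup E] [Module ℂ E] [TopologicalSpace E]
    (B : ℕ → Set E)
    (hBbounded : ∀ N, Bornology.IsVonNBounded ℂ (B N))
    (hBmono : Monotone B)
    (hBfund : ∀ S : Set E, Bornology.IsVonNBounded ℂ S → ∃ N, S ⊆ B N)
    (hno_fund_bdd : ¬ ∃ B₀ : Set E, Bornology.IsVonNBounded ℂ B₀ ∧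
      ∀ S : Set E, Bornology.IsVonNBounded ℂ S → ∃ C : ℝ, 0 < C ∧ S ⊆ C • B₀)
    (N₀ : ℕ) : ∃ M₁ : ℕ, N₀ ≤ M₁ ∧ ∀ c : ℝ, 0 < c → ¬ B M₁ ⊆ c • B N₀ := by
  by_contra h
  push_neg at h
  refine hno_fund_bdd ⟨B N₀, hBbounded N₀, ?_⟩
  intro S hS
  obtain ⟨M, hSM⟩ := hBfund S hS
  obtain ⟨c, hc, hsub⟩ := h (max M N₀) (le_max_right _ _)
  exact ⟨c, hc, (hSM.trans (hBmono (le_max_left _ _))).trans hsub⟩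

/-- If E has no fundamental bounded set, then (E, (Z n)) satisfies (S)
iff it satisfies (WS). -/
theorem stmt2 {E : Type*} [AddCommGroup E] [Module ℂ E] [TopologicalSpace E]
    [IsTopologicalAddGroup E] [ContinuousSMul ℂ E] [LocallyConvexSpace ℝ E] [T2Space E]
    (B : ℕ → Set E)
    (hBclosed : ∀ N, IsClosed (B N))
    (hBconvex : ∀ N, Convex ℝ (B N))
    (hBbalanced : ∀ N, Balanced ℂ (B N))
    (hBbounded : ∀ N, Bornology.IsVonNBounded ℂ (B N))
    (hBmono : Monotone B)
    (hBfund : ∀ S : Set E, Bornology.IsVonNBounded ℂ S → ∃ N, S ⊆ B N)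
    (hno_fund_bdd : ¬ ∃ B₀ : Set E, Bornology.IsVonNBounded ℂ B₀ ∧
      ∀ S : Set E, Bornology.IsVonNBounded ℂ S → ∃ C : ℝ, 0 < C ∧ S ⊆ C • B₀)
    {Z : ℕ → Type*} [∀ n, NormedAddCommGroup (Z n)] [∀ n, NormedSpace ℂ (Z n)]
    [∀ n, CompleteSpace (Z n)]
    (j : ∀ n m : ℕ, n ≤ m → (Z n →L[ℂ] Z m))
    (hj_id : ∀ n, j n n le_rfl = ContinuousLinearMap.id ℂ (Z n))
    (hj_comp : ∀ n m k (hnm : n ≤ m) (hmk : m ≤ k) (z : Z n),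
      j m k hmk (j n m hnm z) = j n k (hnm.trans hmk) z)
    (hj_inj : ∀ n m (hnm : n ≤ m), Function.Injective (j n m hnm)) :
    PairCondS B j ↔ PairCondWS B j := by
  constructor
  · -- (S) ⟹ (WS) : take ε = 1 and enlarge the constant.
    intro hS n
    obtain ⟨m, hnm, h⟩ := hS n
    refine ⟨m, hnm, ?_⟩
    intro k hmk
    obtain ⟨N, hN⟩ := h k hmk
    refine ⟨N, ?_⟩
    intro M hNM
    obtain ⟨K, hMK, C, hC, hincl⟩ := hN M hNM 1 one_pos
    refine ⟨K, hMK, C + 1, by positivity, ?_⟩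
    intro z x hx
    obtain ⟨p, hp, q, hq, hpq⟩ := Set.mem_add.1 (hincl z hx)
    have hp' : p ∈ ((C + 1) * ‖j n k (hnm.trans hmk) z‖) • B K := by
      refine smul_mono_scalar (hBbalanced K) (by positivity) ?_ hp
      nlinarith [norm_nonneg (j n k (hnm.trans hmk) z)]
    have hq' : q ∈ ((C + 1) * ‖z‖) • B N := by
      refine smul_mono_scalar (hBbalanced N) (by positivity) ?_ hq
      nlinarith [norm_nonneg z, hC]
    obtain ⟨p₀, hp₀, hp₀e⟩ := Set.mem_smul_set.1 hp'
    obtain ⟨q₀, hq₀, hq₀e⟩ := Set.mem_smul_set.1 hq'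
    refine Set.mem_smul_set.2 ⟨‖j n k (hnm.trans hmk) z‖ • p₀ + ‖z‖ • q₀,
      Set.add_mem_add (Set.smul_mem_smul_set hp₀) (Set.smul_mem_smul_set hq₀), ?_⟩
    rw [smul_add, smul_smul, smul_smul, hp₀e, hq₀e]
    exact hpq
  · -- (WS) ⟹ (S)
    intro hWS n
    obtain ⟨m₁, hnm₁, h₁⟩ := hWS n
    obtain ⟨m₂, hm₁₂, h₂⟩ := hWS m₁
    refine ⟨m₂, hnm₁.trans hm₁₂, ?_⟩
    intro k hmk
    obtain ⟨NB, hB⟩ := h₂ k hmk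
    obtain ⟨NA, hA⟩ := h₁ k (hm₁₂.trans hmk)
    -- a level not absorbed by any multiple of B NA
    obtain ⟨M₁, hM₁ge, hM₁bad⟩ :=
      exists_bad_level B hBbounded hBmono hBfund hno_fund_bdd NA
    obtain ⟨K₁, hK₁ge, C₁, hC₁, hincl₁⟩ := hA M₁ hM₁ge
    refine ⟨NB, ?_⟩
    intro M hNBM ε hε
    obtain ⟨K, hMK, Cs, hCs, hincl⟩ := hB M hNBM
    -- condition (Q)-type estimate with η = ε / Cs
    obtain ⟨C₃, hC₃, hQ⟩ := condQ_aux
      (fun z : Z n => ‖j n m₁ hnm₁ z‖)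
      (fun z : Z n => ‖j n k (hnm₁.trans (hm₁₂.trans hmk)) z‖)
      (fun z : Z n => ‖z‖)
      (fun z => norm_nonneg _) (fun z => norm_nonneg _)
      (hBclosed NA) (hBbalanced NA) (hBbounded K₁) hC₁ hincl₁ hM₁bad
      (η := ε / Cs) (by positivity)
    refine ⟨K, hMK, Cs + Cs * C₃, by positivity, ?_⟩
    intro z
    have hcomp1 := hj_comp n m₁ m₂ hnm₁ hm₁₂ z
    have hcomp2 := hj_comp n m₁ k hnm₁ (hm₁₂.trans hmk) z
    have step1 : ‖j n m₂ (hnm₁.trans hm₁₂) z‖ • B M ⊆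
        Cs • (‖j n k (hnm₁.trans (hm₁₂.trans hmk)) z‖ • B K + ‖j n m₁ hnm₁ z‖ • B NB) := by
      have := hincl (j n m₁ hnm₁ z)
      rwa [hcomp1, hcomp2] at this
    show ‖j n m₂ (hnm₁.trans hm₁₂) z‖ • B M ⊆
        ((Cs + Cs * C₃) * ‖j n k (hnm₁.trans (hm₁₂.trans hmk)) z‖) • B K + (ε * ‖z‖) • B NB
    intro x hx
    obtain ⟨p, hp, hpx⟩ := Set.mem_smul_set.1 (step1 hx)
    obtain ⟨u, hu, v, hv, huv⟩ := Set.mem_add.1 hp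
    obtain ⟨u₀, hu₀, hu₀e⟩ := Set.mem_smul_set.1 hu
    obtain ⟨v₀, hv₀, hv₀e⟩ := Set.mem_smul_set.1 hv
    set nk : ℝ := ‖j n k (hnm₁.trans (hm₁₂.trans hmk)) z‖ with hnk
    set nm : ℝ := ‖j n m₁ hnm₁ z‖ with hnm
    have hnk0 : 0 ≤ nk := norm_nonneg _
    have hnm0 : 0 ≤ nm := norm_nonneg _
    have hxeq : x = (Cs * nk) • u₀ + (Cs * nm) • v₀ := by
      rw [← hpx, ← huv, ← hu₀e, ← hv₀e, smul_add, smul_smul, smul_smul]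
    -- split the second term
    have hv' : (Cs * nm) • v₀ ∈ (Cs * C₃ * nk + ε * ‖z‖) • B NB := by
      have hmem : (Cs * nm) • v₀ ∈ (Cs * nm) • B NB := Set.smul_mem_smul_set hv₀
      refine smul_mono_scalar (hBbalanced NB) (by positivity) ?_ hmem
      have hq := hQ z
      have h2 : Cs * nm ≤ Cs * (C₃ * nk + ε / Cs * ‖z‖) :=
        mul_le_mul_of_nonneg_left hq hCs.le
      have h3 : Cs * (C₃ * nk + ε / Cs * ‖z‖) = Cs * C₃ * nk + ε * ‖z‖ := by
        field_simp
      linarith [h2, h3.le, h3.ge]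
    rw [Convex.add_smul (hBconvex NB) (by positivity) (by positivity)] at hv'
    obtain ⟨q₁, hq₁, q₂, hq₂, hqe⟩ := Set.mem_add.1 hv'
    -- move q₁ into B K
    have hq₁' : q₁ ∈ (Cs * C₃ * nk) • B K :=
      Set.smul_set_mono (hBmono (hNBM.trans hMK)) hq₁
    have hcomb : (Cs * nk) • u₀ + q₁ ∈ ((Cs + Cs * C₃) * nk) • B K := by
      have heq : (Cs + Cs * C₃) * nk = Cs * nk + Cs * C₃ * nk := by ring
      rw [heq, Convex.add_smul (hBconvex K) (by positivity) (by positivity)]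
      exact Set.add_mem_add (Set.smul_mem_smul_set hu₀) hq₁'
    have hxeq2 : x = ((Cs * nk) • u₀ + q₁) + q₂ := by
      rw [hxeq, ← hqe]; abel
    rw [hxeq2]
    exact Set.add_mem_add hcomb hq₂
end

section
/- Let E be a Hausdorff locally convex topological vector space over ℂ equipped with an increasing sequence (B_N)_{N∈ℕ} of closed, absolutely convex, bounded subsets that is fundamental, and let (Z_n)_{n∈ℕ} be an inductive spectrum of Banach spaces. If E satisfies condition (A) and (Z_n) satisfies condition (DΩ), then the pair (E,(Z_n)) satisfies condition (S). -/
open Pointwise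

section helpers
variable {E : Type*} [AddCommGroup E] [Module ℂ E]

lemma smul_set_add_subset' (a : ℝ) (s t : Set E) : a • (s + t) ⊆ a • s + a • t := by
  rintro x ⟨y, hy, rfl⟩
  rw [Set.mem_add] at hy
  obtain ⟨u, hu, v, hv, rfl⟩ := hy
  show a • (u + v) ∈ _
  rw [smul_add]
  exact Set.add_mem_add ⟨u, hu, rfl⟩ ⟨v, hv, rfl⟩

lemma smul_smul_set' (a b : ℝ) (s : Set E) : a • (b • s) ⊆ (a * b) • s := by
  rintro x ⟨y, ⟨u, hu, rfl⟩, rfl⟩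
  exact ⟨u, hu, (smul_smul a b u).symm⟩

lemma balanced_smul_mono' {s : Set E} (hs : Balanced ℂ s) {a b : ℝ}
    (ha : 0 ≤ a) (hab : a ≤ b) : a • s ⊆ b • s := by
  rcases eq_or_lt_of_le (ha.trans hab) with hb | hb
  · have : a = 0 := le_antisymm (hab.trans hb.symm.le) ha
    subst this; rw [← hb]
  · rintro x ⟨y, hy, rfl⟩
    have hmem : (a / b) • y ∈ s := by
      have : ‖((a / b : ℝ) : ℂ)‖ ≤ 1 := by
        rw [Complex.norm_real, Real.norm_eq_abs, abs_of_nonneg (div_nonneg ha hb.le)]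
        exact div_le_one_of_le₀ hab hb.le
      have h2 := hs _ this ⟨y, hy, rfl⟩
      have h3 : ((a / b : ℝ) : ℂ) • y ∈ s := h2
      rwa [Complex.coe_smul] at h3
    exact ⟨(a / b) • y, hmem, by show b • _ = a • y; rw [smul_smul, mul_div_cancel₀ _ hb.ne']⟩

end helpers

/-- Condition (A) for a lcHs with fundamental increasing sequence of bounded sets `B`. -/
def CondA {E : Type*} [AddCommGroup E] [Module ℂ E] (B : ℕ → Set E) : Prop :=
  ∃ N : ℕ, ∀ M : ℕ, N ≤ M → ∀ ν : ℝ, 0 < ν → ∃ K : ℕ, M ≤ K ∧ ∃ C : ℝ, 0 < C ∧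
    ∀ r : ℝ, 0 < r → B M ⊆ r • B K + (C / r ^ ν) • B N

/-- Condition (DΩ) for an inductive spectrum of Banach spaces. -/
def SpectrumCondDOmega {Z : ℕ → Type*} [∀ n, NormedAddCommGroup (Z n)]
    [∀ n, NormedSpace ℂ (Z n)]
    (j : ∀ n m : ℕ, n ≤ m → (Z n →L[ℂ] Z m)) : Prop :=
  ∀ n : ℕ, ∃ m : ℕ, ∃ hnm : n ≤ m, ∀ k : ℕ, ∀ hmk : m ≤ k,
    ∃ θ : ℝ, θ ∈ Set.Ioo (0 : ℝ) 1 ∧ ∃ C : ℝ, 0 < C ∧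
      ∀ z : Z n, ‖j n m hnm z‖ ≤ C * ‖z‖ ^ θ * ‖j n k (hnm.trans hmk) z‖ ^ (1 - θ)

/-- If E satisfies (A) and (Z n) satisfies (DΩ), then (E, (Z n)) satisfies (S). -/
theorem stmt3 {E : Type*} [AddCommGroup E] [Module ℂ E] [TopologicalSpace E]
    [IsTopologicalAddGroup E] [ContinuousSMul ℂ E] [LocallyConvexSpace ℝ E] [T2Space E]
    (B : ℕ → Set E)
    (hBclosed : ∀ N, IsClosed (B N))
    (hBconvex : ∀ N, Convex ℝ (B N))
    (hBbalanced : ∀ N, Balanced ℂ (B N))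
    (hBbounded : ∀ N, Bornology.IsVonNBounded ℂ (B N))
    (hBmono : Monotone B)
    (hBfund : ∀ S : Set E, Bornology.IsVonNBounded ℂ S → ∃ N, S ⊆ B N)
    {Z : ℕ → Type*} [∀ n, NormedAddCommGroup (Z n)] [∀ n, NormedSpace ℂ (Z n)]
    [∀ n, CompleteSpace (Z n)]
    (j : ∀ n m : ℕ, n ≤ m → (Z n →L[ℂ] Z m))
    (hj_id : ∀ n, j n n le_rfl = ContinuousLinearMap.id ℂ (Z n))
    (hj_comp : ∀ n m k (hnm : n ≤ m) (hmk : m ≤ k) (z : Z n),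
      j m k hmk (j n m hnm z) = j n k (hnm.trans hmk) z)
    (hj_inj : ∀ n m (hnm : n ≤ m), Function.Injective (j n m hnm))
    (hA : CondA B) (hDO : SpectrumCondDOmega j) :
    PairCondS B j := by
  intro n
  obtain ⟨m, hnm, hm⟩ := hDO n
  refine ⟨m, hnm, ?_⟩
  intro k hmk
  obtain ⟨θ, ⟨hθ0, hθ1⟩, C₀, hC₀, hDom⟩ := hm k hmk
  obtain ⟨N, hN⟩ := hA
  refine ⟨N, ?_⟩
  intro M hNM ε hε
  set ν : ℝ := 1 - θ with hν
  have hν0 : 0 < ν := by simp only [hν]; linarith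
  obtain ⟨K, hMK, CA, hCA, hAincl⟩ := hN M hNM ν hν0
  set D : ℝ := ‖j n m hnm‖ with hD
  have hD0 : 0 ≤ D := norm_nonneg _
  set s : ℝ := max 1 ((CA * C₀ / ε) ^ (1/ν)) with hs
  have hs1 : (1:ℝ) ≤ s := le_max_left _ _
  have hs0 : (0:ℝ) < s := lt_of_lt_of_le one_pos hs1
  have hsνpos : (0:ℝ) < s ^ ν := Real.rpow_pos_of_pos hs0 ν
  have hsν : CA * C₀ / ε ≤ s ^ ν := by
    have hx : (0:ℝ) ≤ CA * C₀ / ε := by positivity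
    calc CA * C₀ / ε = ((CA * C₀ / ε) ^ (1/ν)) ^ ν := by
          rw [← Real.rpow_mul hx, one_div, inv_mul_cancel₀ hν0.ne', Real.rpow_one]
      _ ≤ s ^ ν := Real.rpow_le_rpow (Real.rpow_nonneg hx _) (le_max_right _ _) hν0.le
  have hεs : CA * C₀ / s ^ ν ≤ ε := by
    rw [div_le_iff₀ hsνpos]
    rw [div_le_iff₀ hε] at hsν
    linarith [hsν]
  refine ⟨K, hMK, s * D + 1, by positivity, ?_⟩
  intro z
  by_cases hz : z = 0
  · subst hz
    by_cases hBM : (B M).Nonempty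
    · obtain ⟨x, hx⟩ := hBM
      have hmem := hAincl 1 one_pos hx
      rw [Set.mem_add] at hmem
      obtain ⟨u, ⟨u', hu', rfl⟩, v, ⟨v', hv', rfl⟩, -⟩ := hmem
      rintro y ⟨w, hw, rfl⟩
      have h0 : ‖j n m hnm (0 : Z n)‖ = 0 := by rw [map_zero, norm_zero]
      show ‖j n m hnm (0 : Z n)‖ • w ∈ _
      rw [h0, zero_smul]
      have h1 : (0:E) ∈ ((s * D + 1) * ‖j n k (hnm.trans hmk) (0 : Z n)‖) • B K :=
        ⟨u', hu', by show ((s * D + 1) * ‖j n k (hnm.trans hmk) (0 : Z n)‖) • u' = 0; rw [map_zero, norm_zero, mul_zero, zero_smul]⟩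
      have h2 : (0:E) ∈ (ε * ‖(0 : Z n)‖) • B N :=
        ⟨v', hv', by show (ε * ‖(0 : Z n)‖) • v' = 0; rw [norm_zero, mul_zero, zero_smul]⟩
      simpa using Set.add_mem_add h1 h2
    · rw [Set.not_nonempty_iff_eq_empty] at hBM
      rw [hBM, Set.smul_set_empty]
      exact Set.empty_subset _
  · set a : ℝ := ‖z‖ with ha_def
    set b : ℝ := ‖j n m hnm z‖ with hb_def
    set c : ℝ := ‖j n k (hnm.trans hmk) z‖ with hc_def
    have ha : 0 < a := norm_pos_iff.mpr hz
    have hb0 : 0 ≤ b := norm_nonneg _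
    have hc : 0 < c := by
      rw [hc_def, norm_pos_iff]
      intro h
      exact hz (hj_inj n k (hnm.trans hmk) (by rw [h, map_zero]))
    have hbDa : b ≤ D * a := (j n m hnm).le_opNorm z
    have hbdom : b ≤ C₀ * a ^ θ * c ^ ν := hDom z
    set r : ℝ := s * c / a with hr_def
    have hr : 0 < r := by positivity
    have hrν : r ^ ν = s ^ ν * c ^ ν / a ^ ν := by
      rw [hr_def, Real.div_rpow (by positivity) ha.le, Real.mul_rpow hs0.le hc.le]
    have hcν : (0:ℝ) < c ^ ν := Real.rpow_pos_of_pos hc ν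
    have haν : (0:ℝ) < a ^ ν := Real.rpow_pos_of_pos ha ν
    have haθ : (0:ℝ) < a ^ θ := Real.rpow_pos_of_pos ha θ
    have hpow : a ^ θ * a ^ ν = a := by
      have h1 : θ + ν = 1 := by rw [hν]; ring
      rw [← Real.rpow_add ha, h1, Real.rpow_one]
    -- first scalar bound
    have key1 : b * r ≤ (s * D + 1) * c := by
      have h1 : b * r = b * s * c / a := by rw [hr_def]; ring
      rw [h1]
      rw [div_le_iff₀ ha]
      have : b * s * c ≤ D * a * s * c := by
        have := mul_le_mul_of_nonneg_right hbDa (by positivity : (0:ℝ) ≤ s * c)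
        nlinarith
      nlinarith
    -- second scalar bound
    have key2 : b * (CA / r ^ ν) ≤ ε * a := by
      have h1 : b * (CA / r ^ ν) ≤ (C₀ * a ^ θ * c ^ ν) * (CA / r ^ ν) :=
        mul_le_mul_of_nonneg_right hbdom (by positivity)
      have h2 : (C₀ * a ^ θ * c ^ ν) * (CA / r ^ ν) = (CA * C₀ / s ^ ν) * (a ^ θ * a ^ ν) := by
        rw [hrν]
        field_simp
      rw [hpow] at h2
      have h3 : (CA * C₀ / s ^ ν) * a ≤ ε * a :=
        mul_le_mul_of_nonneg_right hεs ha.le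
      linarith
    -- assemble
    calc b • B M ⊆ b • (r • B K + (CA / r ^ ν) • B N) :=
          Set.smul_set_mono (hAincl r hr)
      _ ⊆ b • (r • B K) + b • ((CA / r ^ ν) • B N) := smul_set_add_subset' _ _ _
      _ ⊆ (b * r) • B K + (b * (CA / r ^ ν)) • B N :=
          Set.add_subset_add (smul_smul_set' _ _ _) (smul_smul_set' _ _ _)
      _ ⊆ ((s * D + 1) * c) • B K + (ε * a) • B N :=
          Set.add_subset_add
            (balanced_smul_mono' (hBbalanced K) (by positivity) key1)
            (balanced_smul_mono' (hBbalanced N) (by positivity) key2)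
end

section
/- Let V be a complex vector space, let W₀ ⊆ W₁ be linear subspaces of V, and let p₀ be a seminorm on W₀, p₁ a seminorm on W₁, and p₂ a seminorm on V such that for some c > 0 one has p₁(x) ≤ c·p₀(x) for all x ∈ W₀ and p₂(x) ≤ c·p₁(x) for all x ∈ W₁ (continuity of the inclusions). Let C, ε > 0 and suppose that p₁(x) ≤ C·p₂(x) + ε·p₀(x) for all x ∈ W₀. Then for every ℂ-linear functional f₁ : W₁ → ℂ with |f₁(x)| ≤ p₁(x) for all x ∈ W₁ there exist ℂ-linear functionals f₂ : V → ℂ with |f₂(x)| ≤ 2C·p₂(x) for all x ∈ V and f₀ : W₀ → ℂ with |f₀(x)| ≤ 2ε·p₀(x) for all x ∈ W₀, such that f₁(x) = f₂(x) + f₀(x) for all x ∈ W₀. -/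
set_option maxHeartbeats 1000000 in
/-- Hahn-Banach: extend a seminorm-dominated complex functional from a submodule. -/
lemma hb_seminorm {E : Type*} [AddCommGroup E] [Module ℂ E] (p : Seminorm ℂ E)
    (S : Submodule ℂ E) (f : S →ₗ[ℂ] ℂ) (hf : ∀ x : S, ‖f x‖ ≤ p (x : E)) :
    ∃ g : E →ₗ[ℂ] ℂ, (∀ x : S, g (x : E) = f x) ∧ ∀ x : E, ‖g x‖ ≤ p x := by
  letI : SeminormedAddCommGroup E :=
    AddGroupSeminorm.toSeminormedAddCommGroup p.toAddGroupSeminorm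
  letI ns : NormedSpace ℂ E := { norm_smul_le := fun c x => le_of_eq (map_smul_eq_mul p c x) }
  have hnorm : ∀ x : E, ‖x‖ = p x := fun x => rfl
  let f' : S →L[ℂ] ℂ := LinearMap.mkContinuous f 1 (by
    intro x
    rw [one_mul]
    exact hf x)
  obtain ⟨g, hg, hgnorm⟩ := @exists_extension_norm_eq ℂ _ _ E _ ns S f'
  have hle : ‖g‖ ≤ 1 := by
    rw [hgnorm]
    exact LinearMap.mkContinuous_norm_le f zero_le_one _
  exact ⟨g.toLinearMap, hg, fun x => by
    calc ‖g x‖ ≤ ‖g‖ * ‖x‖ := g.le_opNorm x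
    _ ≤ 1 * p x := mul_le_mul hle (le_of_eq (hnorm x)) (norm_nonneg x) zero_le_one
    _ = p x := one_mul _⟩

/-- Extension/decomposition lemma for a dominated linear functional on a triple of
seminormed subspaces `W₀ ⊆ W₁ ⊆ V`. -/
theorem stmt4 {V : Type*} [AddCommGroup V] [Module ℂ V]
    (W₀ W₁ : Submodule ℂ V) (hW : W₀ ≤ W₁)
    (p₀ : Seminorm ℂ W₀) (p₁ : Seminorm ℂ W₁) (p₂ : Seminorm ℂ V)
    (c : ℝ) (hc : 0 < c)
    (hcont₁ : ∀ x : W₀, p₁ (Submodule.inclusion hW x) ≤ c * p₀ x)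
    (hcont₂ : ∀ x : W₁, p₂ (x : V) ≤ c * p₁ x)
    (C ε : ℝ) (hC : 0 < C) (hε : 0 < ε)
    (hdom : ∀ x : W₀, p₁ (Submodule.inclusion hW x) ≤ C * p₂ (x : V) + ε * p₀ x)
    (f₁ : W₁ →ₗ[ℂ] ℂ) (hf₁ : ∀ x : W₁, ‖f₁ x‖ ≤ p₁ x) :
    ∃ f₂ : V →ₗ[ℂ] ℂ, ∃ f₀ : W₀ →ₗ[ℂ] ℂ,
      (∀ x : V, ‖f₂ x‖ ≤ 2 * C * p₂ x) ∧
      (∀ x : W₀, ‖f₀ x‖ ≤ 2 * ε * p₀ x) ∧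
      (∀ x : W₀, f₁ (Submodule.inclusion hW x) = f₂ (x : V) + f₀ x) := by
  -- the seminorm q(u,v) = C·p₂(u) + ε·p₀(v) on V × W₀
  set q : Seminorm ℂ (V × W₀) :=
    C.toNNReal • p₂.comp (LinearMap.fst ℂ V W₀) +
      ε.toNNReal • p₀.comp (LinearMap.snd ℂ V W₀) with hq
  have hqval : ∀ u : V, ∀ v : W₀, q (u, v) = C * p₂ u + ε * p₀ v := by
    intro u v
    simp [hq, Seminorm.add_apply, Seminorm.smul_apply, Seminorm.comp_apply,
      NNReal.smul_def, Real.coe_toNNReal C hC.le, Real.coe_toNNReal ε hε.le]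
  -- the diagonal embedding of W₀ into V × W₀
  let j : W₀ →ₗ[ℂ] V × W₀ := LinearMap.prod W₀.subtype LinearMap.id
  have hj : Function.Injective j := fun x y h => by
    simpa [j] using congrArg Prod.snd h
  let e : W₀ ≃ₗ[ℂ] LinearMap.range j := LinearEquiv.ofInjective j hj
  let φ : W₀ →ₗ[ℂ] ℂ := f₁.comp (Submodule.inclusion hW)
  let F : (LinearMap.range j) →ₗ[ℂ] ℂ := φ.comp (e.symm : LinearMap.range j →ₗ[ℂ] W₀)
  have hF : ∀ d : LinearMap.range j, ‖F d‖ ≤ q (d : V × W₀) := by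
    intro d
    set x := e.symm d with hx
    have hd : (d : V × W₀) = j x := by
      have : e x = d := by rw [hx]; exact e.apply_symm_apply d
      rw [← this]; rfl
    have hFd : F d = φ x := rfl
    rw [hFd, hd]
    have : (j x : V × W₀) = ((x : V), x) := rfl
    rw [this, hqval]
    calc ‖φ x‖ = ‖f₁ (Submodule.inclusion hW x)‖ := rfl
      _ ≤ p₁ (Submodule.inclusion hW x) := hf₁ _
      _ ≤ C * p₂ (x : V) + ε * p₀ x := hdom x
  obtain ⟨G, hGext, hGle⟩ := hb_seminorm q (LinearMap.range j) F hF
  refine ⟨G.comp (LinearMap.inl ℂ V W₀), G.comp (LinearMap.inr ℂ V W₀), ?_, ?_, ?_⟩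
  · intro x
    have := hGle (x, 0)
    rw [hqval] at this
    simp only [map_zero, mul_zero, add_zero] at this
    calc ‖G.comp (LinearMap.inl ℂ V W₀) x‖ = ‖G (x, 0)‖ := rfl
      _ ≤ C * p₂ x := this
      _ ≤ 2 * C * p₂ x := by nlinarith [apply_nonneg p₂ x]
  · intro x
    have := hGle (0, x)
    rw [hqval] at this
    simp only [map_zero, mul_zero, zero_add] at this
    calc ‖G.comp (LinearMap.inr ℂ V W₀) x‖ = ‖G (0, x)‖ := rfl
      _ ≤ ε * p₀ x := this
      _ ≤ 2 * ε * p₀ x := by nlinarith [apply_nonneg p₀ x]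
  · intro x
    have hmem : j x ∈ LinearMap.range j := LinearMap.mem_range_self j x
    have h1 : G (j x) = F ⟨j x, hmem⟩ := hGext ⟨j x, hmem⟩
    have h2 : F ⟨j x, hmem⟩ = φ x := by
      have : e.symm ⟨j x, hmem⟩ = x := by
        apply hj
        calc j (e.symm ⟨j x, hmem⟩)
            = ((e (e.symm ⟨j x, hmem⟩) : LinearMap.range j) : V × W₀) := rfl
          _ = j x := congrArg Subtype.val (e.apply_symm_apply _)
      show φ (e.symm ⟨j x, hmem⟩) = φ x
      rw [this]
    have h3 : (j x : V × W₀) = ((x : V), (0 : W₀)) + ((0 : V), x) := by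
      show ((x : V), x) = _
      simp
    calc f₁ (Submodule.inclusion hW x) = φ x := rfl
      _ = G (j x) := by rw [h1, h2]
      _ = G (((x : V), (0 : W₀)) + ((0 : V), x)) := by rw [h3]
      _ = G ((x : V), (0 : W₀)) + G ((0 : V), x) := map_add G _ _
      _ = _ := rfl
end

section
/- Let Z_n, Z_m, Z_k and F₀, F₁, F₂ be complex Banach spaces, let α : Z_n → Z_m, β : Z_m → Z_k and γ : F₀ → F₁, δ : F₁ → F₂ be injective continuous linear maps, and let C > 0. Assume that for every continuous linear operator T : Z_m → F₁ with ‖T‖ ≤ 1 there exist continuous linear operators S : Z_k → F₂ with ‖S‖ ≤ C and R : Z_n → F₀ with ‖R‖ ≤ C such that δ(T(α z)) = S(β(α z)) + δ(γ(R z)) for all z ∈ Z_n. Then for every z ∈ Z_n and every e ∈ F₁ with ‖e‖ ≤ 1 there exist u ∈ F₂ with ‖u‖ ≤ C·‖β(α z)‖ and v ∈ F₀ with ‖v‖ ≤ C·‖z‖ such that ‖α z‖ • δ(e) = u + δ(γ(v)). -/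
/-- The operator-decomposition condition implies the corresponding set-inclusion
condition (reduction in the proof that Proj¹ℒ(Z,E) = 0 implies (WS)). -/
theorem stmt5 {Zn Zm Zk F₀ F₁ F₂ : Type*}
    [NormedAddCommGroup Zn] [NormedSpace ℂ Zn] [CompleteSpace Zn]
    [NormedAddCommGroup Zm] [NormedSpace ℂ Zm] [CompleteSpace Zm]
    [NormedAddCommGroup Zk] [NormedSpace ℂ Zk] [CompleteSpace Zk]
    [NormedAddCommGroup F₀] [NormedSpace ℂ F₀] [CompleteSpace F₀]
    [NormedAddCommGroup F₁] [NormedSpace ℂ F₁] [CompleteSpace F₁]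
    [NormedAddCommGroup F₂] [NormedSpace ℂ F₂] [CompleteSpace F₂]
    (α : Zn →L[ℂ] Zm) (β : Zm →L[ℂ] Zk) (γ : F₀ →L[ℂ] F₁) (δ : F₁ →L[ℂ] F₂)
    (hα : Function.Injective α) (hβ : Function.Injective β)
    (hγ : Function.Injective γ) (hδ : Function.Injective δ)
    (C : ℝ) (hC : 0 < C)
    (h : ∀ T : Zm →L[ℂ] F₁, ‖T‖ ≤ 1 →
      ∃ S : Zk →L[ℂ] F₂, ‖S‖ ≤ C ∧ ∃ R : Zn →L[ℂ] F₀, ‖R‖ ≤ C ∧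
        ∀ z : Zn, δ (T (α z)) = S (β (α z)) + δ (γ (R z))) :
    ∀ z : Zn, ∀ e : F₁, ‖e‖ ≤ 1 →
      ∃ u : F₂, ‖u‖ ≤ C * ‖β (α z)‖ ∧ ∃ v : F₀, ‖v‖ ≤ C * ‖z‖ ∧
        ‖α z‖ • δ e = u + δ (γ v) := by
  intro z e he
  by_cases hz : α z = 0
  · refine ⟨0, by simp; positivity, 0, by simp; positivity, ?_⟩
    simp [hz]
  · obtain ⟨φ, hφ, hφx⟩ := exists_dual_vector ℂ (α z) (norm_ne_zero_iff.mpr hz)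
    set T : Zm →L[ℂ] F₁ := φ.smulRight e with hT
    have hTnorm : ‖T‖ ≤ 1 := by
      rw [hT, ContinuousLinearMap.norm_smulRight_apply, hφ, one_mul]; exact he
    obtain ⟨S, hS, R, hR, hSR⟩ := h T hTnorm
    refine ⟨S (β (α z)), ?_, R z, ?_, ?_⟩
    · exact (S.le_opNorm _).trans (mul_le_mul_of_nonneg_right hS (norm_nonneg _))
    · exact (R.le_opNorm _).trans (mul_le_mul_of_nonneg_right hR (norm_nonneg _))
    · have := hSR z
      have hTz : T (α z) = (‖α z‖ : ℂ) • e := by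
        simp [hT, hφx]
      rw [hTz] at this
      rw [← this]
      rw [map_smul]
      norm_cast
end

section
/- Let Z₁, Z₂, Z₃, Z₄, Z₅ be complex Hilbert spaces with injective continuous linear maps i₁ : Z₁ → Z₂, i₂ : Z₂ → Z₃, i₃ : Z₃ → Z₄, i₄ : Z₄ → Z₅, and suppose there are constants c₁, c₄ > 0 such that for every orthonormal family (b_t)_{t∈ι} in Z₁ one has ∑_t ‖i₁(b_t)‖² ≤ c₁², and for every orthonormal family (b_t)_{t∈ι} in Z₄ one has ∑_t ‖i₄(b_t)‖² ≤ c₄² (i.e., i₁ and i₄ are Hilbert–Schmidt with Hilbert–Schmidt norms at most c₁ and c₄). Let F₀, F₁, F₂ be complex Banach spaces with continuous linear maps γ : F₀ → F₁ and δ : F₁ → F₂, and let C, ε > 0. Assume that for every z ∈ Z₁ and every e ∈ F₁ with ‖e‖ ≤ 1 there exist u ∈ F₂ with ‖u‖ ≤ C·‖i₄(i₃(i₂(i₁ z)))‖ and v ∈ F₀ with ‖v‖ ≤ ε·‖i₁ z‖ such that ‖i₂(i₁ z)‖ • δ(e) = u + δ(γ(v)). Then for every continuous linear operator T : Z₃ →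 F₁ with ‖T‖ ≤ 1 there exist continuous linear operators S : Z₄ → F₂ with ‖S‖ ≤ C·c₄ and R : Z₁ → F₀ with ‖R‖ ≤ ε·c₁ such that δ(T(i₂(i₁ z))) = S(i₃(i₂(i₁ z))) + δ(γ(R z)) for all z ∈ Z₁. -/
open scoped InnerProductSpace
open Filter


lemma auxCS {ι : Type*} (s : Finset ι) (f g : ι → ℝ) (hf : ∀ i, 0 ≤ f i) (hg : ∀ i, 0 ≤ g i) :
    ∑ i ∈ s, f i * g i ≤ Real.sqrt (∑ i ∈ s, f i ^ 2) * Real.sqrt (∑ i ∈ s, g i ^ 2) := by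
  have h := Finset.sum_mul_sq_le_sq_mul_sq s f g
  have h1 : 0 ≤ ∑ i ∈ s, f i * g i := Finset.sum_nonneg fun i _ => mul_nonneg (hf i) (hg i)
  have h3 : 0 ≤ ∑ i ∈ s, f i ^ 2 := Finset.sum_nonneg fun i _ => sq_nonneg _
  calc ∑ i ∈ s, f i * g i = Real.sqrt ((∑ i ∈ s, f i * g i)^2) := (Real.sqrt_sq h1).symm
    _ ≤ Real.sqrt ((∑ i ∈ s, f i ^ 2) * (∑ i ∈ s, g i ^ 2)) := Real.sqrt_le_sqrt h
    _ = _ := Real.sqrt_mul h3 _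

/-- Build a bounded operator from an orthonormal family and dominated vectors. -/
lemma auxOp {ι H E : Type*} [NormedAddCommGroup H] [InnerProductSpace ℂ H]
    [NormedAddCommGroup E] [NormedSpace ℂ E] [CompleteSpace E]
    (b : ι → H) (hb : Orthonormal ℂ b) (w : ι → E) (c : ι → ℝ)
    (hw : ∀ t, ‖w t‖ ≤ c t) (hc : ∀ t, 0 ≤ c t) (M : ℝ) (hM : 0 ≤ M)
    (hcM : ∀ s : Finset ι, ∑ t ∈ s, (c t)^2 ≤ M^2) :
    ∃ R : H →L[ℂ] E, ‖R‖ ≤ M ∧ ∀ x, R x = ∑' t, ⟪b t, x⟫_ℂ • w t := by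
  have key : ∀ (x : H) (s : Finset ι), ∑ t ∈ s, ‖⟪b t, x⟫_ℂ • w t‖ ≤ M * ‖x‖ := by
    intro x s
    have h1 : ∀ t, ‖⟪b t, x⟫_ℂ • w t‖ ≤ ‖⟪b t, x⟫_ℂ‖ * c t := by
      intro t
      rw [norm_smul]
      exact mul_le_mul_of_nonneg_left (hw t) (norm_nonneg _)
    calc ∑ t ∈ s, ‖⟪b t, x⟫_ℂ • w t‖ ≤ ∑ t ∈ s, ‖⟪b t, x⟫_ℂ‖ * c t :=
          Finset.sum_le_sum fun t _ => h1 t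
      _ ≤ Real.sqrt (∑ t ∈ s, ‖⟪b t, x⟫_ℂ‖ ^ 2) * Real.sqrt (∑ t ∈ s, (c t) ^ 2) :=
          auxCS s _ _ (fun t => norm_nonneg _) hc
      _ ≤ Real.sqrt (‖x‖^2) * Real.sqrt (M^2) := by
          apply mul_le_mul (Real.sqrt_le_sqrt (hb.sum_inner_products_le x))
            (Real.sqrt_le_sqrt (hcM s)) (Real.sqrt_nonneg _) (Real.sqrt_nonneg _)
      _ = M * ‖x‖ := by
          rw [Real.sqrt_sq (norm_nonneg _), Real.sqrt_sq hM, mul_comm]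
  have hsumnorm : ∀ x : H, Summable fun t => ‖⟪b t, x⟫_ℂ • w t‖ := by
    intro x
    exact summable_of_sum_le (fun t => norm_nonneg _) (key x)
  have hsum : ∀ x : H, Summable fun t => ⟪b t, x⟫_ℂ • w t := fun x => (hsumnorm x).of_norm
  let R₀ : H →ₗ[ℂ] E :=
    { toFun := fun x => ∑' t, ⟪b t, x⟫_ℂ • w t
      map_add' := by
        intro x y
        simp only [inner_add_right, add_smul]
        exact Summable.tsum_add (hsum x) (hsum y)
      map_smul' := by
        intro a x
        simp only [inner_smul_right, RingHom.id_apply, mul_smul]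
        exact Summable.tsum_const_smul a (hsum x) }
  have hbound : ∀ x, ‖R₀ x‖ ≤ M * ‖x‖ := by
    intro x
    calc ‖R₀ x‖ ≤ ∑' t, ‖⟪b t, x⟫_ℂ • w t‖ := norm_tsum_le_tsum_norm (hsumnorm x)
      _ ≤ M * ‖x‖ := Summable.tsum_le_of_sum_le (hsumnorm x) (key x)
  refine ⟨R₀.mkContinuous M hbound, R₀.mkContinuous_norm_le hM hbound, fun x => rfl⟩


/-- From the HS bound: finite orthonormal family capturing almost all of `i₁`. -/
lemma auxTail {Z₁ Z₂ : Type*} [NormedAddCommGroup Z₁] [InnerProductSpace ℂ Z₁]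
    [NormedAddCommGroup Z₂] [InnerProductSpace ℂ Z₂]
    (i₁ : Z₁ →L[ℂ] Z₂) (c₁ : ℝ)
    (hHS₁ : ∀ {ι : Type} (b : ι → Z₁), Orthonormal ℂ b →
      ∀ s : Finset ι, ∑ t ∈ s, ‖i₁ (b t)‖ ^ 2 ≤ c₁ ^ 2)
    {e : ℝ} (he : 0 < e) :
    ∃ n, ∃ g : Fin n → Z₁, Orthonormal ℂ g ∧
      ∀ w : Z₁, (∀ i, ⟪g i, w⟫_ℂ = 0) → ‖i₁ w‖ ≤ e * ‖w‖ := by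
  set Sset : Set ℝ := {r | ∃ n, ∃ g : Fin n → Z₁, Orthonormal ℂ g ∧ r = ∑ i, ‖i₁ (g i)‖ ^ 2}
    with hSset
  have hne : Sset.Nonempty := by
    refine ⟨0, 0, Fin.elim0, ⟨fun i => i.elim0, fun {i j} _ => i.elim0⟩, by simp⟩
  have hbdd : BddAbove Sset := by
    refine ⟨c₁ ^ 2, ?_⟩
    rintro r ⟨n, g, hg, rfl⟩
    exact hHS₁ g hg Finset.univ
  set σ := sSup Sset with hσ
  obtain ⟨r, hr, hrgt⟩ := exists_lt_of_lt_csSup hne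
    (show σ - e ^ 2 < σ by linarith [sq_nonneg e, pow_pos he 2])
  obtain ⟨n, g, hg, rfl⟩ := hr
  refine ⟨n, g, hg, ?_⟩
  have key : ∀ w : Z₁, ‖w‖ = 1 → (∀ i, ⟪g i, w⟫_ℂ = 0) → ‖i₁ w‖ ≤ e := by
    intro w hw hperp
    have hg' : Orthonormal ℂ (Fin.snoc g w : Fin (n+1) → Z₁) := by
      constructor
      · intro i
        induction i using Fin.lastCases with
        | last => simpa using hw
        | cast i => simpa using hg.1 i
      · intro i j hij
        induction i using Fin.lastCases with
        | last =>
          induction j using Fin.lastCases with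
          | last => exact absurd rfl hij
          | cast j =>
            simp only [Fin.snoc_last, Fin.snoc_castSucc]
            exact inner_eq_zero_symm.mp (hperp j)
        | cast i =>
          induction j using Fin.lastCases with
          | last => simpa using hperp i
          | cast j =>
            simp only [Fin.snoc_castSucc]
            exact hg.2 fun hh => hij (congrArg Fin.castSucc hh)
    have hmem : (∑ i : Fin (n+1), ‖i₁ ((Fin.snoc g w : Fin (n+1) → Z₁) i)‖ ^ 2) ∈ Sset :=
      ⟨n+1, _, hg', rfl⟩
    have hle := le_csSup hbdd hmem
    rw [Fin.sum_univ_castSucc] at hle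
    simp only [Fin.snoc_castSucc, Fin.snoc_last] at hle
    have hsq : ‖i₁ w‖ ^ 2 ≤ e ^ 2 := by linarith
    nlinarith [norm_nonneg (i₁ w)]
  intro w hperp
  rcases eq_or_ne w 0 with rfl | hw0
  · simp
  · have hn : ‖w‖ ≠ 0 := norm_ne_zero_iff.mpr hw0
    have := key (‖w‖⁻¹ • w) (by rw [norm_smul]; simp [hn]) ?_
    · rw [i₁.map_smul_of_tower, norm_smul] at this
      simp only [norm_inv, norm_norm] at this
      rw [inv_mul_le_iff₀ (by positivity)] at this
      linarith [this]
    · intro i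
      rw [RCLike.real_smul_eq_coe_smul (K := ℂ), inner_smul_right, hperp i, mul_zero]

/-- `i₁` is a compact operator: sequential compactness on the unit ball. -/
lemma auxCompact {Z₁ Z₂ : Type*} [NormedAddCommGroup Z₁] [InnerProductSpace ℂ Z₁]
    [NormedAddCommGroup Z₂] [InnerProductSpace ℂ Z₂] [CompleteSpace Z₂]
    (i₁ : Z₁ →L[ℂ] Z₂) (c₁ : ℝ)
    (hHS₁ : ∀ {ι : Type} (b : ι → Z₁), Orthonormal ℂ b →
      ∀ s : Finset ι, ∑ t ∈ s, ‖i₁ (b t)‖ ^ 2 ≤ c₁ ^ 2)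
    (x : ℕ → Z₁) (hx : ∀ n, ‖x n‖ ≤ 1) :
    ∃ φ : ℕ → ℕ, StrictMono φ ∧ ∃ L : Z₂,
      Tendsto (fun n => i₁ (x (φ n))) atTop (nhds L) := by
  classical
  have htb : TotallyBounded (i₁ '' Metric.closedBall (0:Z₁) 1) := by
    rw [Metric.totallyBounded_iff]
    intro δ hδ
    obtain ⟨n, g, hg, hgsmall⟩ := auxTail i₁ c₁ hHS₁ (show (0:ℝ) < δ/4 by linarith)
    set Pm : Z₁ → Z₁ := fun y => ∑ i, ⟪g i, y⟫_ℂ • g i with hPm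
    have hperp : ∀ y, ∀ j, ⟪g j, y - Pm y⟫_ℂ = 0 := by
      intro y j
      rw [inner_sub_right, hPm]
      simp only [inner_sum, inner_smul_right, orthonormal_iff_ite.mp hg]
      simp [Finset.sum_ite_eq]
    have hPy : ∀ y, ‖Pm y‖ ≤ ‖y‖ ∧ ‖y - Pm y‖ ≤ ‖y‖ := by
      intro y
      have horth : ⟪Pm y, y - Pm y⟫_ℂ = 0 := by
        rw [hPm]
        simp only [sum_inner, inner_smul_left]
        rw [Finset.sum_eq_zero]
        intro j _
        rw [hperp y j, mul_zero]
      have hpyth : ‖y‖^2 = ‖Pm y‖^2 + ‖y - Pm y‖^2 := by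
        have := norm_add_sq (𝕜 := ℂ) (Pm y) (y - Pm y)
        rw [horth] at this
        simpa using this
      constructor
      · nlinarith [norm_nonneg (Pm y), norm_nonneg (y - Pm y), norm_nonneg y]
      · nlinarith [norm_nonneg (Pm y), norm_nonneg (y - Pm y), norm_nonneg y]
    -- Pm y lies in the span, a finite-dimensional submodule
    set E := Submodule.span ℂ (Set.range g) with hE
    haveI : FiniteDimensional ℂ E := FiniteDimensional.span_of_finite ℂ (Set.finite_range g)
    have hPmE : ∀ y, Pm y ∈ E := by
      intro y
      exact Submodule.sum_mem _ fun i _ =>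
        Submodule.smul_mem _ _ (Submodule.subset_span (Set.mem_range_self i))
    have hcpt1 : IsCompact (E.subtypeL '' Metric.closedBall 0 1) :=
      (ProperSpace.isCompact_closedBall _ _).image E.subtypeL.continuous
    have hcpt2 : IsCompact (i₁ '' (E.subtypeL '' Metric.closedBall 0 1)) :=
      hcpt1.image i₁.continuous
    obtain ⟨t, htfin, htcov⟩ := (Metric.totallyBounded_iff).mp hcpt2.totallyBounded (δ/2)
      (by linarith)
    refine ⟨t, htfin, ?_⟩
    rintro _ ⟨y, hy, rfl⟩
    have hy1 : ‖y‖ ≤ 1 := by simpa [Metric.mem_closedBall] using hy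
    have hPmem : i₁ (Pm y) ∈ i₁ '' (E.subtypeL '' Metric.closedBall 0 1) := by
      refine ⟨Pm y, ⟨⟨Pm y, hPmE y⟩, ?_, rfl⟩, rfl⟩
      simpa [Metric.mem_closedBall, Submodule.norm_coe] using le_trans (hPy y).1 hy1
    obtain ⟨c, hct, hc⟩ := Set.mem_iUnion₂.mp (htcov hPmem)
    refine Set.mem_iUnion₂.mpr ⟨c, hct, ?_⟩
    have hnear : ‖i₁ y - i₁ (Pm y)‖ ≤ δ/4 := by
      rw [← map_sub]
      calc ‖i₁ (y - Pm y)‖ ≤ δ/4 * ‖y - Pm y‖ := hgsmall _ (hperp y)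
        _ ≤ δ/4 * 1 := by
            apply mul_le_mul_of_nonneg_left (le_trans (hPy y).2 hy1) (by linarith)
        _ = δ/4 := mul_one _
    rw [Metric.mem_ball] at hc ⊢
    calc dist (i₁ y) c ≤ dist (i₁ y) (i₁ (Pm y)) + dist (i₁ (Pm y)) c := dist_triangle _ _ _
      _ ≤ δ/4 + dist (i₁ (Pm y)) c := by rw [dist_eq_norm]; linarith [hnear]
      _ < δ/4 + δ/2 := by linarith [hc]
      _ ≤ δ := by linarith
  have hK : IsCompact (closure (i₁ '' Metric.closedBall (0:Z₁) 1)) :=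
    TotallyBounded.isCompact_of_isClosed htb.closure isClosed_closure
  have hmem : ∀ n, i₁ (x n) ∈ closure (i₁ '' Metric.closedBall (0:Z₁) 1) := by
    intro n
    exact subset_closure ⟨x n, by simpa [Metric.mem_closedBall] using hx n, rfl⟩
  obtain ⟨L, _, φ, hφ, hconv⟩ := hK.tendsto_subseq hmem
  exact ⟨φ, hφ, L, hconv⟩


/-- Eigenvector existence for `B†B` when `B` is "compact". -/
lemma auxEigen {H G : Type*} [NormedAddCommGroup H] [InnerProductSpace ℂ H] [CompleteSpace H]
    [NormedAddCommGroup G] [InnerProductSpace ℂ G] [CompleteSpace G]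
    (B : H →L[ℂ] G) (hB : B ≠ 0)
    (hcpt : ∀ x : ℕ → H, (∀ n, ‖x n‖ ≤ 1) → ∃ φ : ℕ → ℕ, StrictMono φ ∧ ∃ L : H,
      Tendsto (fun n => (ContinuousLinearMap.adjoint B) (B (x (φ n)))) atTop (nhds L)) :
    ∃ x₀ : H, x₀ ≠ 0 ∧ ∃ μ : ℝ,
      (ContinuousLinearMap.adjoint B) (B x₀) = (μ : ℂ) • x₀ := by
  classical
  set P : H →L[ℂ] H := (ContinuousLinearMap.adjoint B).comp B with hPdef
  have hPBB : ∀ y z : H, ⟪P y, z⟫_ℂ = ⟪B y, B z⟫_ℂ := by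
    intro y z
    rw [hPdef]
    simp [ContinuousLinearMap.adjoint_inner_left]
  set Sset : Set ℝ := {r | ∃ y : H, ‖y‖ ≤ 1 ∧ r = ‖B y‖ ^ 2} with hSset
  have hne : Sset.Nonempty := ⟨‖B (0:H)‖^2, 0, by simp, rfl⟩
  have hbdd : BddAbove Sset := by
    refine ⟨‖B‖^2, ?_⟩
    rintro r ⟨y, hy, rfl⟩
    have h1 : ‖B y‖ ≤ ‖B‖ := by
      calc ‖B y‖ ≤ ‖B‖ * ‖y‖ := B.le_opNorm y
        _ ≤ ‖B‖ * 1 := mul_le_mul_of_nonneg_left hy (norm_nonneg _)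
        _ = ‖B‖ := mul_one _
    exact pow_le_pow_left₀ (norm_nonneg _) h1 2
  set m := sSup Sset with hm
  have hmpos : 0 < m := by
    obtain ⟨y, hy⟩ : ∃ y : H, B y ≠ 0 := by
      by_contra hcon
      push_neg at hcon
      exact hB (by ext z; simpa using hcon z)
    have hy0 : y ≠ 0 := fun hh => hy (by simp [hh])
    have hny : ‖y‖ ≠ 0 := norm_ne_zero_iff.mpr hy0
    have hmem : ‖B (‖y‖⁻¹ • y)‖^2 ∈ Sset :=
      ⟨_, by rw [norm_smul]; simp [hny], rfl⟩
    have hpos : 0 < ‖B (‖y‖⁻¹ • y)‖^2 := by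
      have : B (‖y‖⁻¹ • y) = ‖y‖⁻¹ • B y := B.map_smul_of_tower _ _
      rw [this]
      have hlt : 0 < ‖(‖y‖⁻¹ : ℝ) • B y‖ := by
        rw [norm_smul, norm_inv, norm_norm]
        exact mul_pos (inv_pos.mpr (norm_pos_iff.mpr hy0)) (norm_pos_iff.mpr hy)
      exact pow_pos hlt 2
    exact lt_of_lt_of_le hpos (le_csSup hbdd hmem)
  have hBle : ∀ y : H, ‖B y‖^2 ≤ m * ‖y‖^2 := by
    intro y
    rcases eq_or_ne y 0 with rfl | hy0
    · simp
    · have hny : ‖y‖ ≠ 0 := norm_ne_zero_iff.mpr hy0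
      have hmem : ‖B (‖y‖⁻¹ • y)‖^2 ∈ Sset := ⟨_, by rw [norm_smul]; simp [hny], rfl⟩
      have hle : ‖B (‖y‖⁻¹ • y)‖^2 ≤ m := le_csSup hbdd hmem
      rw [B.map_smul_of_tower, norm_smul] at hle
      have h2 : (‖y‖⁻¹ * ‖B y‖)^2 ≤ m := by simpa [abs_of_nonneg] using hle
      have h3 : ‖y‖^2 ≠ 0 := pow_ne_zero _ hny
      have := mul_le_mul_of_nonneg_right h2 (sq_nonneg ‖y‖)
      calc ‖B y‖^2 = (‖y‖⁻¹ * ‖B y‖)^2 * ‖y‖^2 := by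
            field_simp
      _ ≤ m * ‖y‖^2 := this
  have hBle' : ∀ y : H, ‖B y‖ ≤ Real.sqrt m * ‖y‖ := by
    intro y
    have := hBle y
    calc ‖B y‖ = Real.sqrt (‖B y‖^2) := (Real.sqrt_sq (norm_nonneg _)).symm
      _ ≤ Real.sqrt (m * ‖y‖^2) := Real.sqrt_le_sqrt this
      _ = Real.sqrt m * ‖y‖ := by
          rw [Real.sqrt_mul hmpos.le, Real.sqrt_sq (norm_nonneg _)]
  have hPle : ∀ y : H, ‖P y‖^2 ≤ m * ‖B y‖^2 := by
    intro y
    have h1 : ‖P y‖^2 ≤ ‖B y‖ * (Real.sqrt m * ‖P y‖) := by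
      have : (‖P y‖:ℝ)^2 = ‖⟪P y, P y⟫_ℂ‖ := by
        rw [inner_self_eq_norm_sq_to_K (𝕜 := ℂ)]
        simp
      rw [this, hPBB]
      calc ‖⟪B y, B (P y)⟫_ℂ‖ ≤ ‖B y‖ * ‖B (P y)‖ := norm_inner_le_norm _ _
        _ ≤ ‖B y‖ * (Real.sqrt m * ‖P y‖) :=
            mul_le_mul_of_nonneg_left (hBle' _) (norm_nonneg _)
    rcases eq_or_ne (‖P y‖) 0 with hz | hz
    · rw [hz]
      simpa using mul_nonneg hmpos.le (sq_nonneg ‖B y‖)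
    · have hPpos : 0 < ‖P y‖ := lt_of_le_of_ne (norm_nonneg _) (Ne.symm hz)
      have h2 : ‖P y‖ ≤ ‖B y‖ * Real.sqrt m := by
        have := h1
        rw [show ‖B y‖ * (Real.sqrt m * ‖P y‖) = (‖B y‖ * Real.sqrt m) * ‖P y‖ by ring] at this
        nlinarith
      calc ‖P y‖^2 ≤ (‖B y‖ * Real.sqrt m)^2 := by
            apply pow_le_pow_left₀ (norm_nonneg _) h2
        _ = m * ‖B y‖^2 := by
            rw [mul_pow, Real.sq_sqrt hmpos.le]; ring
  have hseq : ∀ n : ℕ, ∃ y : H, ‖y‖ ≤ 1 ∧ m - 1/(n+1) < ‖B y‖^2 := by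
    intro n
    have hlt : m - 1/((n:ℝ)+1) < m := by
      have : (0:ℝ) < 1/((n:ℝ)+1) := by positivity
      linarith
    obtain ⟨r, ⟨y, hy1, rfl⟩, hr⟩ := exists_lt_of_lt_csSup hne hlt
    exact ⟨y, hy1, hr⟩
  choose x hx1 hx2 using hseq
  have hdiff : ∀ n : ℕ, ‖P (x n) - (m:ℂ) • x n‖^2 ≤ m * (1/((n:ℝ)+1)) := by
    intro n
    have hexp : ‖P (x n) - (m:ℂ) • x n‖^2
        = ‖P (x n)‖^2 - 2 * (m * ‖B (x n)‖^2) + m^2 * ‖x n‖^2 := by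
      rw [norm_sub_sq (𝕜 := ℂ)]
      have h1 : ⟪P (x n), (m:ℂ) • x n⟫_ℂ = (m:ℂ) * ((‖B (x n)‖:ℂ))^2 := by
        rw [inner_smul_right, hPBB, inner_self_eq_norm_sq_to_K]
        norm_num
      have h2 : ‖(m:ℂ) • x n‖ = m * ‖x n‖ := by
        rw [norm_smul]
        simp [abs_of_pos hmpos]
      rw [h1, h2]
      have h3 : RCLike.re ((m:ℂ) * ((‖B (x n)‖:ℂ))^2) = m * ‖B (x n)‖^2 := by
        rw [← Complex.ofReal_pow, ← Complex.ofReal_mul]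
        exact Complex.ofReal_re _
      rw [h3]
      ring
    have hx1sq : ‖x n‖^2 ≤ 1 := by
      have := hx1 n
      nlinarith [norm_nonneg (x n)]
    nlinarith [hPle (x n), hx2 n, hmpos, hx1sq, sq_nonneg (‖B (x n)‖)]
  have hbnd : Tendsto (fun n : ℕ => m * (1/((n:ℝ)+1))) atTop (nhds 0) := by
    simpa using tendsto_one_div_add_atTop_nhds_zero_nat.const_mul m
  have hto0 : Tendsto (fun n => ‖P (x n) - (m:ℂ) • x n‖) atTop (nhds 0) := by
    have hb : ∀ n : ℕ, ‖P (x n) - (m:ℂ) • x n‖ ≤ Real.sqrt (m * (1/((n:ℝ)+1))) := by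
      intro n
      calc ‖P (x n) - (m:ℂ) • x n‖ = Real.sqrt (‖P (x n) - (m:ℂ) • x n‖^2) :=
            (Real.sqrt_sq (norm_nonneg _)).symm
        _ ≤ Real.sqrt (m * (1/((n:ℝ)+1))) := Real.sqrt_le_sqrt (hdiff n)
    have hs : Tendsto (fun n : ℕ => Real.sqrt (m * (1/((n:ℝ)+1)))) atTop (nhds 0) := by
      have := hbnd.sqrt
      simpa using this
    exact squeeze_zero (fun n => norm_nonneg _) hb hs
  have hdiff0 : Tendsto (fun n => P (x n) - (m:ℂ) • x n) atTop (nhds 0) := by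
    rw [tendsto_zero_iff_norm_tendsto_zero]
    exact hto0
  obtain ⟨φ, hφ, L, hL⟩ := hcpt x hx1
  have hLP : Tendsto (fun n => P (x (φ n))) atTop (nhds L) := hL
  have hsub0 : Tendsto (fun n => P (x (φ n)) - (m:ℂ) • x (φ n)) atTop (nhds 0) :=
    hdiff0.comp hφ.tendsto_atTop
  have hmx : Tendsto (fun n => (m:ℂ) • x (φ n)) atTop (nhds L) := by
    have heq : (fun n => (m:ℂ) • x (φ n))
        = fun n => P (x (φ n)) - (P (x (φ n)) - (m:ℂ) • x (φ n)) := by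
      funext n; rw [sub_sub_cancel]
    rw [heq]
    simpa using hLP.sub hsub0
  have hmne : (m:ℂ) ≠ 0 := by exact_mod_cast hmpos.ne'
  set x₀ : H := (m:ℂ)⁻¹ • L with hx₀def
  have hxconv : Tendsto (fun n => x (φ n)) atTop (nhds x₀) := by
    have hcs := hmx.const_smul ((m:ℂ)⁻¹)
    have heq2 : (fun k => ((m:ℂ)⁻¹) • ((m:ℂ) • x (φ k))) = fun k => x (φ k) := by
      funext k; rw [inv_smul_smul₀ hmne]
    rw [heq2] at hcs
    rw [hx₀def]
    exact hcs
  have hPx₀ : P x₀ = L :=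
    tendsto_nhds_unique ((P.continuous.tendsto x₀).comp hxconv) hLP
  have hLx₀ : L = (m:ℂ) • x₀ := (smul_inv_smul₀ hmne L).symm
  have hBlim1 : Tendsto (fun n => ‖B (x (φ n))‖^2) atTop (nhds (‖B x₀‖^2)) :=
    (((B.continuous.tendsto x₀).comp hxconv).norm.pow 2)
  have hBlim2 : Tendsto (fun n : ℕ => ‖B (x n)‖^2) atTop (nhds m) := by
    apply tendsto_of_tendsto_of_tendsto_of_le_of_le
      (g := fun n : ℕ => m - 1/((n:ℝ)+1)) (h := fun _ : ℕ => m)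
    · simpa using (tendsto_const_nhds (x := m)).sub tendsto_one_div_add_atTop_nhds_zero_nat
    · exact tendsto_const_nhds
    · exact fun n => (hx2 n).le
    · intro n
      have hx1sq : ‖x n‖^2 ≤ 1 := by nlinarith [norm_nonneg (x n), hx1 n]
      calc ‖B (x n)‖^2 ≤ m * ‖x n‖^2 := hBle _
        _ ≤ m * 1 := mul_le_mul_of_nonneg_left hx1sq hmpos.le
        _ = m := mul_one _
  have hBx₀ : ‖B x₀‖^2 = m :=
    tendsto_nhds_unique hBlim1 (hBlim2.comp hφ.tendsto_atTop)
  have hx₀ne : x₀ ≠ 0 := by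
    intro hcon
    rw [hcon] at hBx₀
    simp at hBx₀
    exact hmpos.ne hBx₀
  refine ⟨x₀, hx₀ne, m, ?_⟩
  have : P x₀ = (m:ℂ) • x₀ := by rw [hPx₀, hLx₀]
  simpa [hPdef] using this


/-- Transport the `Type 0` HS bound to arbitrary index types. -/
lemma auxHS {ι : Type*} {Z W : Type*} [NormedAddCommGroup Z] [InnerProductSpace ℂ Z]
    [NormedAddCommGroup W] [NormedSpace ℂ W]
    (i : Z →L[ℂ] W) (c : ℝ)
    (hHS : ∀ {κ : Type} (b : κ → Z), Orthonormal ℂ b →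
      ∀ s : Finset κ, ∑ t ∈ s, ‖i (b t)‖ ^ 2 ≤ c ^ 2)
    (b : ι → Z) (hb : Orthonormal ℂ b) (s : Finset ι) :
    ∑ t ∈ s, ‖i (b t)‖ ^ 2 ≤ c ^ 2 := by
  classical
  set e := s.equivFin with he
  set g : Fin s.card → Z := fun j => b ((e.symm j : s) : ι) with hg
  have hginj : Function.Injective (fun j : Fin s.card => ((e.symm j : s) : ι)) := by
    intro a b hab
    exact e.symm.injective (Subtype.coe_injective hab)
  have hgon : Orthonormal ℂ g := hb.comp _ hginj
  have := hHS g hgon Finset.univ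
  have hsum : ∑ j : Fin s.card, ‖i (g j)‖ ^ 2 = ∑ t ∈ s, ‖i (b t)‖ ^ 2 := by
    rw [← Finset.sum_attach s (fun t => ‖i (b t)‖ ^ 2)]
    exact Fintype.sum_equiv e.symm _ _ (fun j => rfl)
  rwa [hsum] at this

/-- Hilbertian case (Hilbert–Schmidt spectra) of the lemma that condition (S)
implies Proj¹ℒ(Z,E) = 0: the set-inclusion condition implies the
operator-decomposition condition, with constants multiplied by the
Hilbert–Schmidt norms of the outer inclusions. -/
theorem stmt8 {Z₁ Z₂ Z₃ Z₄ Z₅ : Type*}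
    [NormedAddCommGroup Z₁] [InnerProductSpace ℂ Z₁] [CompleteSpace Z₁]
    [NormedAddCommGroup Z₂] [InnerProductSpace ℂ Z₂] [CompleteSpace Z₂]
    [NormedAddCommGroup Z₃] [InnerProductSpace ℂ Z₃] [CompleteSpace Z₃]
    [NormedAddCommGroup Z₄] [InnerProductSpace ℂ Z₄] [CompleteSpace Z₄]
    [NormedAddCommGroup Z₅] [InnerProductSpace ℂ Z₅] [CompleteSpace Z₅]
    {F₀ F₁ F₂ : Type*}
    [NormedAddCommGroup F₀] [NormedSpace ℂ F₀] [CompleteSpace F₀]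
    [NormedAddCommGroup F₁] [NormedSpace ℂ F₁] [CompleteSpace F₁]
    [NormedAddCommGroup F₂] [NormedSpace ℂ F₂] [CompleteSpace F₂]
    (i₁ : Z₁ →L[ℂ] Z₂) (i₂ : Z₂ →L[ℂ] Z₃) (i₃ : Z₃ →L[ℂ] Z₄) (i₄ : Z₄ →L[ℂ] Z₅)
    (hi₁ : Function.Injective i₁) (hi₂ : Function.Injective i₂)
    (hi₃ : Function.Injective i₃) (hi₄ : Function.Injective i₄)
    (γ : F₀ →L[ℂ] F₁) (δ : F₁ →L[ℂ] F₂)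
    (c₁ c₄ : ℝ) (hc₁ : 0 < c₁) (hc₄ : 0 < c₄)
    (hHS₁ : ∀ {ι : Type} (b : ι → Z₁), Orthonormal ℂ b →
      ∀ s : Finset ι, ∑ t ∈ s, ‖i₁ (b t)‖ ^ 2 ≤ c₁ ^ 2)
    (hHS₄ : ∀ {ι : Type} (b : ι → Z₄), Orthonormal ℂ b →
      ∀ s : Finset ι, ∑ t ∈ s, ‖i₄ (b t)‖ ^ 2 ≤ c₄ ^ 2)
    (C ε : ℝ) (hC : 0 < C) (hε : 0 < ε)
    (h : ∀ z : Z₁, ∀ e : F₁, ‖e‖ ≤ 1 →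
      ∃ u : F₂, ‖u‖ ≤ C * ‖i₄ (i₃ (i₂ (i₁ z)))‖ ∧
        ∃ v : F₀, ‖v‖ ≤ ε * ‖i₁ z‖ ∧ ‖i₂ (i₁ z)‖ • δ e = u + δ (γ v)) :
    ∀ T : Z₃ →L[ℂ] F₁, ‖T‖ ≤ 1 →
      ∃ S : Z₄ →L[ℂ] F₂, ‖S‖ ≤ C * c₄ ∧ ∃ R : Z₁ →L[ℂ] F₀, ‖R‖ ≤ ε * c₁ ∧
        ∀ z : Z₁, δ (T (i₂ (i₁ z))) = S (i₃ (i₂ (i₁ z))) + δ (γ (R z)) := by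
  classical
  intro T hT
  set A : Z₁ →L[ℂ] Z₄ := (i₃.comp i₂).comp i₁ with hA
  have hA_apply : ∀ z, A z = i₃ (i₂ (i₁ z)) := fun z => rfl
  have hAinj : Function.Injective A := by
    intro a b hab
    exact hi₁ (hi₂ (hi₃ hab))
  set P : Z₁ →L[ℂ] Z₁ := (ContinuousLinearMap.adjoint A).comp A with hP
  have hPA : ∀ y z : Z₁, ⟪P y, z⟫_ℂ = ⟪A y, A z⟫_ℂ := by
    intro y z
    rw [hP]
    simp [ContinuousLinearMap.adjoint_inner_left]
  -- Zorn's lemma: a maximal orthonormal set of eigenvectors of P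
  set 𝒞 : Set (Set Z₁) := {s | Orthonormal ℂ ((↑) : s → Z₁) ∧ ∀ x ∈ s, ∃ μ : ℂ, P x = μ • x}
    with h𝒞
  obtain ⟨s₀, hmax⟩ : ∃ s₀, Maximal (· ∈ 𝒞) s₀ := by
    apply zorn_subset
    intro c hc hchain
    refine ⟨⋃₀ c, ⟨?_, ?_⟩, fun s hs => Set.subset_sUnion_of_mem hs⟩
    · rw [orthonormal_subtype_iff_ite]
      intro v hv w hw
      obtain ⟨sv, hsv, hvsv⟩ := hv
      obtain ⟨sw, hsw, hwsw⟩ := hw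
      rcases hchain.total hsv hsw with hsub | hsub
      · exact orthonormal_subtype_iff_ite.mp (hc hsw).1 v (hsub hvsv) w hwsw
      · exact orthonormal_subtype_iff_ite.mp (hc hsv).1 v hvsv w (hsub hwsw)
    · rintro x ⟨sx, hsx, hxsx⟩
      exact (hc hsx).2 x hxsx
  have hs₀ : s₀ ∈ 𝒞 := hmax.prop
  have hON : Orthonormal ℂ ((↑) : s₀ → Z₁) := hs₀.1
  have heig : ∀ x ∈ s₀, ∃ μ : ℂ, P x = μ • x := hs₀.2
  set V : Submodule ℂ Z₁ := Submodule.span ℂ s₀ with hV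
  have hVorth : ∀ x : Z₁, x ∈ Vᗮ ↔ ∀ u ∈ s₀, ⟪u, x⟫_ℂ = 0 := by
    intro x
    constructor
    · intro hx u hu
      exact (Submodule.mem_orthogonal V x).mp hx u (Submodule.subset_span hu)
    · intro hall
      rw [Submodule.mem_orthogonal]
      intro y hy
      induction hy using Submodule.span_induction with
      | mem y hy => exact hall y hy
      | zero => exact inner_zero_left x
      | add y z _ _ hy hz => rw [inner_add_left, hy, hz, add_zero]
      | smul a y _ hy => rw [inner_smul_left, hy, mul_zero]
  have hPW : ∀ x ∈ Vᗮ, P x ∈ Vᗮ := by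
    intro x hx
    rw [hVorth] at hx ⊢
    intro q hq
    have h1 : ⟪q, P x⟫_ℂ = ⟪P q, x⟫_ℂ := by
      rw [hP]
      simp only [ContinuousLinearMap.comp_apply]
      rw [ContinuousLinearMap.adjoint_inner_right, ContinuousLinearMap.adjoint_inner_left]
    obtain ⟨μ, hμ⟩ := heig q hq
    rw [h1, hμ, inner_smul_left, hx q hq, mul_zero]
  have hVbot : Vᗮ = ⊥ := by
    by_contra hne
    obtain ⟨x, hxW, hx0⟩ := Submodule.exists_mem_ne_zero_of_ne_bot hne
    haveI : CompleteSpace Vᗮ := (Submodule.isClosed_orthogonal V).completeSpace_coe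
    set B : Vᗮ →L[ℂ] Z₄ := A.comp (Submodule.subtypeL Vᗮ) with hB
    have hBapp : ∀ y : Vᗮ, B y = A (y : Z₁) := fun y => rfl
    have hBne : B ≠ 0 := by
      intro hcon
      apply hx0
      have h2 : A x = 0 := by
        have := congrArg (fun (M : Vᗮ →L[ℂ] Z₄) => M ⟨x, hxW⟩) hcon
        simpa [hBapp] using this
      have : A x = A 0 := by simpa using h2
      exact hAinj this
    have hcptB : ∀ y : ℕ → Vᗮ, (∀ n, ‖y n‖ ≤ 1) → ∃ φ : ℕ → ℕ, StrictMono φ ∧ ∃ L : Vᗮ,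
        Tendsto (fun n => (ContinuousLinearMap.adjoint B) (B (y (φ n)))) atTop (nhds L) := by
      intro y hy
      obtain ⟨φ, hφ, L₂, hL₂⟩ := auxCompact i₁ c₁ hHS₁ (fun n => (y n : Z₁))
        (fun n => by simpa using hy n)
      set Q : Z₂ →L[ℂ] Vᗮ := (ContinuousLinearMap.adjoint B).comp (i₃.comp i₂) with hQ
      refine ⟨φ, hφ, Q L₂, ?_⟩
      have hfe : (fun n => (ContinuousLinearMap.adjoint B) (B (y (φ n))))
          = fun n => Q (i₁ ((y (φ n) : Z₁))) := by
        funext n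
        rfl
      rw [hfe]
      exact (Q.continuous.tendsto L₂).comp hL₂
    obtain ⟨xb, hxbne, μ, hμ⟩ := auxEigen B hBne hcptB
    set xg : Z₁ := (xb : Z₁) with hxg
    have hxgW : xg ∈ Vᗮ := xb.2
    have hxgne : xg ≠ 0 := by
      intro hh
      exact hxbne (by ext; simpa [hxg] using hh)
    have hPxg : P xg = (μ:ℂ) • xg := by
      have hmem : P xg ∈ Vᗮ := hPW xg hxgW
      have hkey : (⟨P xg, hmem⟩ : Vᗮ) = (ContinuousLinearMap.adjoint B) (B xb) := by
        apply ext_inner_right ℂ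
        intro y
        rw [Submodule.coe_inner, hPA, ContinuousLinearMap.adjoint_inner_left]
        rfl
      rw [hμ] at hkey
      have := congrArg (Subtype.val) hkey
      simpa using this
    set x₀ : Z₁ := ‖xg‖⁻¹ • xg with hx₀
    have hx₀W : x₀ ∈ Vᗮ := Submodule.smul_of_tower_mem _ _ hxgW
    have hx₀n : ‖x₀‖ = 1 := norm_smul_inv_norm hxgne
    have hx₀ne0 : x₀ ≠ 0 := by
      intro hh
      rw [hh] at hx₀n
      simp at hx₀n
    have hx₀eig : P x₀ = (μ:ℂ) • x₀ := by
      rw [hx₀, P.map_smul_of_tower, hPxg, smul_comm]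
    have hx₀orth : ∀ q ∈ s₀, ⟪q, x₀⟫_ℂ = 0 := (hVorth x₀).mp hx₀W
    have hx₀new : x₀ ∉ s₀ := by
      intro hc
      have := hx₀orth x₀ hc
      rw [inner_self_eq_zero] at this
      exact hx₀ne0 this
    have hins : insert x₀ s₀ ∈ 𝒞 := by
      constructor
      · rw [orthonormal_subtype_iff_ite]
        have hON' := orthonormal_subtype_iff_ite.mp hON
        intro p hp q hq
        rcases hp with rfl | hp
        · rcases hq with rfl | hq
          · rw [if_pos rfl, inner_self_eq_norm_sq_to_K, hx₀n]
            norm_num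
          · rw [if_neg (by intro hh; rw [hh] at hx₀new; exact hx₀new hq)]
            exact inner_eq_zero_symm.mpr (hx₀orth q hq)
        · rcases hq with rfl | hq
          · rw [if_neg (by intro hh; rw [← hh] at hx₀new; exact hx₀new hp)]
            exact hx₀orth p hp
          · exact hON' p hp q hq
      · intro z hz
        rcases hz with rfl | hz
        · exact ⟨(μ:ℂ), hx₀eig⟩
        · exact heig z hz
    have hsub : insert x₀ s₀ ⊆ s₀ := hmax.2 hins (Set.subset_insert _ _)
    exact hx₀new (hsub (Set.mem_insert _ _))
  have hdense : V.topologicalClosure = ⊤ := Submodule.topologicalClosure_eq_top_iff.mpr hVbot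
  -- the data on basis vectors
  set b : s₀ → Z₁ := ((↑) : s₀ → Z₁) with hb
  have hbe : ∀ t : s₀, i₂ (i₁ (b t)) ≠ 0 := by
    intro t hc
    have h0 : b t = (0:Z₁) := hi₁ (hi₂ (by simpa using hc))
    have h1 := hON.1 t
    rw [h0] at h1
    simp at h1
  have hsel : ∀ t : s₀, ∃ u : F₂, ‖u‖ ≤ C * ‖i₄ (i₃ (i₂ (i₁ (b t))))‖ ∧
      ∃ v : F₀, ‖v‖ ≤ ε * ‖i₁ (b t)‖ ∧ δ (T (i₂ (i₁ (b t)))) = u + δ (γ v) := by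
    intro t
    set wv := i₂ (i₁ (b t)) with hwvdef
    have hwv : ‖wv‖ ≠ 0 := norm_ne_zero_iff.mpr (hbe t)
    have he1 : ‖(‖wv‖⁻¹ : ℝ) • T wv‖ ≤ 1 := by
      rw [norm_smul, norm_inv, norm_norm]
      have h2 : ‖T wv‖ ≤ ‖wv‖ := by
        calc ‖T wv‖ ≤ ‖T‖ * ‖wv‖ := T.le_opNorm wv
          _ ≤ 1 * ‖wv‖ := mul_le_mul_of_nonneg_right hT (norm_nonneg _)
          _ = ‖wv‖ := one_mul _
      calc ‖wv‖⁻¹ * ‖T wv‖ ≤ ‖wv‖⁻¹ * ‖wv‖ :=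
            mul_le_mul_of_nonneg_left h2 (inv_nonneg.mpr (norm_nonneg _))
        _ = 1 := inv_mul_cancel₀ hwv
    obtain ⟨u, hu, v, hv, heqq⟩ := h (b t) _ he1
    refine ⟨u, hu, v, hv, ?_⟩
    rw [← heqq, δ.map_smul_of_tower, smul_smul, mul_inv_cancel₀ hwv, one_smul]
  choose u hu v hv heqn using hsel
  have hAbne : ∀ t : s₀, ‖A (b t)‖ ≠ 0 := by
    intro t
    rw [norm_ne_zero_iff]
    intro hc
    apply hbe t
    exact hi₃ (by simpa [hA_apply] using hc)
  have hAorth : ∀ t s : s₀, t ≠ s → ⟪A (b t), A (b s)⟫_ℂ = 0 := by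
    intro t s hts
    rw [← hPA]
    obtain ⟨μ, hμ⟩ := heig (b t) t.2
    rw [hμ, inner_smul_left, hON.2 hts, mul_zero]
  set f : s₀ → Z₄ := fun t => (‖A (b t)‖⁻¹ : ℝ) • A (b t) with hf
  have hfON : Orthonormal ℂ f := by
    constructor
    · intro t
      rw [hf]
      simp only [norm_smul, norm_inv, norm_norm]
      exact inv_mul_cancel₀ (hAbne t)
    · intro t s hts
      rw [hf]
      simp only [RCLike.real_smul_eq_coe_smul (K := ℂ), inner_smul_left, inner_smul_right]
      rw [hAorth t s hts]
      ring
  set w₂ : s₀ → F₂ := fun t => (‖A (b t)‖⁻¹ : ℝ) • u t with hw₂def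
  have hw₂ : ∀ t, ‖w₂ t‖ ≤ C * ‖i₄ (f t)‖ := by
    intro t
    rw [hw₂def]
    simp only [norm_smul, norm_inv, norm_norm]
    have h3 : ‖i₄ (f t)‖ = ‖A (b t)‖⁻¹ * ‖i₄ (A (b t))‖ := by
      rw [hf]
      simp only [i₄.map_smul_of_tower, norm_smul, norm_inv, norm_norm]
    rw [h3]
    calc ‖A (b t)‖⁻¹ * ‖u t‖ ≤ ‖A (b t)‖⁻¹ * (C * ‖i₄ (A (b t))‖) := by
          apply mul_le_mul_of_nonneg_left _ (inv_nonneg.mpr (norm_nonneg _))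
          simpa [hA_apply] using hu t
      _ = C * (‖A (b t)‖⁻¹ * ‖i₄ (A (b t))‖) := by ring
  obtain ⟨S, hSnorm, hSdef⟩ := auxOp f hfON w₂ (fun t => C * ‖i₄ (f t)‖) hw₂
    (fun t => mul_nonneg hC.le (norm_nonneg _)) (C * c₄) (mul_nonneg hC.le hc₄.le)
    (by
      intro s
      have hfle := auxHS i₄ c₄ hHS₄ f hfON s
      calc ∑ t ∈ s, (C * ‖i₄ (f t)‖)^2 = C^2 * ∑ t ∈ s, ‖i₄ (f t)‖^2 := by
            rw [Finset.mul_sum]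
            congr 1
            funext t
            ring
        _ ≤ C^2 * c₄^2 := mul_le_mul_of_nonneg_left hfle (sq_nonneg C)
        _ = (C * c₄)^2 := by ring)
  obtain ⟨R, hRnorm, hRdef⟩ := auxOp b hON v (fun t => ε * ‖i₁ (b t)‖) hv
    (fun t => mul_nonneg hε.le (norm_nonneg _)) (ε * c₁) (mul_nonneg hε.le hc₁.le)
    (by
      intro s
      have hfle := auxHS i₁ c₁ hHS₁ b hON s
      calc ∑ t ∈ s, (ε * ‖i₁ (b t)‖)^2 = ε^2 * ∑ t ∈ s, ‖i₁ (b t)‖^2 := by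
            rw [Finset.mul_sum]
            congr 1
            funext t
            ring
        _ ≤ ε^2 * c₁^2 := mul_le_mul_of_nonneg_left hfle (sq_nonneg ε)
        _ = (ε * c₁)^2 := by ring)
  refine ⟨S, hSnorm, R, hRnorm, ?_⟩
  set D : Z₁ →L[ℂ] F₂ := (δ.comp (T.comp (i₂.comp i₁))) - ((S.comp A) + (δ.comp (γ.comp R)))
    with hD
  have hinner_self_one : ∀ t : s₀, ⟪b t, b t⟫_ℂ = 1 := by
    intro t
    rw [inner_self_eq_norm_sq_to_K, hON.1 t]
    norm_num
  have hDb : ∀ t : s₀, D (b t) = 0 := by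
    intro t
    have hRb : R (b t) = v t := by
      rw [hRdef]
      rw [tsum_eq_single t (fun t' ht' => by rw [hON.2 ht', zero_smul])]
      rw [hinner_self_one t, one_smul]
    have hfinner : ⟪f t, f t⟫_ℂ = 1 := by
      rw [inner_self_eq_norm_sq_to_K, hfON.1 t]
      norm_num
    have hSf : S (f t) = w₂ t := by
      rw [hSdef]
      rw [tsum_eq_single t (fun t' ht' => by rw [hfON.2 ht', zero_smul])]
      rw [hfinner, one_smul]
    have hSb : S (A (b t)) = u t := by
      have h1 : A (b t) = ‖A (b t)‖ • f t := by
        rw [hf]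
        simp only [smul_smul, mul_inv_cancel₀ (hAbne t), one_smul]
      rw [h1, S.map_smul_of_tower, hSf, hw₂def]
      simp only [smul_smul, mul_inv_cancel₀ (hAbne t), one_smul]
    rw [hD]
    simp only [ContinuousLinearMap.sub_apply, ContinuousLinearMap.add_apply,
      ContinuousLinearMap.comp_apply]
    rw [hRb, hSb, heqn t, sub_self]
  have hker : V ≤ LinearMap.ker (D : Z₁ →ₗ[ℂ] F₂) := by
    rw [hV, Submodule.span_le]
    intro x hx
    have := hDb ⟨x, hx⟩
    simpa [LinearMap.mem_ker] using this
  have hker2 : (⊤ : Submodule ℂ Z₁) ≤ LinearMap.ker (D : Z₁ →ₗ[ℂ] F₂) := by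
    rw [← hdense]
    exact V.topologicalClosure_minimal hker (ContinuousLinearMap.isClosed_ker D)
  intro z
  have hz : D z = 0 := by
    have := hker2 (Submodule.mem_top (x := z))
    simpa [LinearMap.mem_ker] using this
  rw [hD] at hz
  simp only [ContinuousLinearMap.sub_apply, ContinuousLinearMap.add_apply,
    ContinuousLinearMap.comp_apply, sub_eq_zero] at hz
  exact hz
end

section
/- Let Z₁, Z₂, Z₃ be complex Banach spaces with injective continuous linear maps α : Z₁ → Z₂ and β : Z₂ → Z₃, and suppose there is C > 0 such that ‖α(z)‖ ≤ C·‖β(α(z))‖ for all z ∈ Z₁. Let F be a complex Hilbert space, G a complex Banach space, and η : F → G a continuous linear map admitting a nuclear representation: there are sequences (e_j)_{j∈ℕ} in F and (f_j)_{j∈ℕ} in G with C₁ := sup_j ‖e_j‖ < ∞, C₂ := ∑_j ‖f_j‖ < ∞, and η(x) = ∑_j ⟨x, e_j⟩ f_j for all x ∈ F (the series converging in G). Then for every continuous linear operator T : Z₂ → F with ‖T‖ ≤ 1 there exists a continuous linear operator S : Z₃ → G with ‖S‖ ≤ C·C₁·C₂ such that S(β(α(z))) = η(T(α(z))) for all z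 ∈ Z₁. -/
set_option maxHeartbeats 1000000

private lemma hasSum_clm_apply_aux {E Fv : Type*} [NormedAddCommGroup E] [NormedSpace ℂ E]
    [NormedAddCommGroup Fv] [NormedSpace ℂ Fv]
    (φ : ℕ → E →L[ℂ] Fv) (Φ : E →L[ℂ] Fv) (h : HasSum φ Φ) (x : E) :
    HasSum (fun i => φ i x) (Φ x) :=
  (ContinuousLinearMap.apply ℂ Fv x).hasSum h


/-- Extension step in Case 2 of the nuclear case of the lemma that condition (S)
implies Proj¹ℒ(Z,E) = 0: given a dominated spectrum step and a nuclear map η out of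
a Hilbert space, operators into the Hilbert space extend along the spectrum after
composing with η. -/
theorem stmt9 {Z₁ Z₂ Z₃ : Type*}
    [NormedAddCommGroup Z₁] [NormedSpace ℂ Z₁] [CompleteSpace Z₁]
    [NormedAddCommGroup Z₂] [NormedSpace ℂ Z₂] [CompleteSpace Z₂]
    [NormedAddCommGroup Z₃] [NormedSpace ℂ Z₃] [CompleteSpace Z₃]
    (α : Z₁ →L[ℂ] Z₂) (β : Z₂ →L[ℂ] Z₃)
    (hα : Function.Injective α) (hβ : Function.Injective β)
    (C : ℝ) (hC : 0 < C)
    (hdom : ∀ z : Z₁, ‖α z‖ ≤ C * ‖β (α z)‖)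
    {F : Type*} [NormedAddCommGroup F] [InnerProductSpace ℂ F] [CompleteSpace F]
    {G : Type*} [NormedAddCommGroup G] [NormedSpace ℂ G] [CompleteSpace G]
    (η : F →L[ℂ] G) (e : ℕ → F) (f : ℕ → G) (C₁ C₂ : ℝ)
    (hC₁ : ∀ j : ℕ, ‖e j‖ ≤ C₁)
    (hC₂ : HasSum (fun j : ℕ => ‖f j‖) C₂)
    (hη : ∀ x : F, HasSum (fun j : ℕ => (inner ℂ (e j) x : ℂ) • f j) (η x)) :
    ∀ T : Z₂ →L[ℂ] F, ‖T‖ ≤ 1 →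
      ∃ S : Z₃ →L[ℂ] G, ‖S‖ ≤ C * C₁ * C₂ ∧
        ∀ z : Z₁, S (β (α z)) = η (T (α z)) := by
  intro T hT
  classical
  have hC₁0 : 0 ≤ C₁ := le_trans (norm_nonneg (e 0)) (hC₁ 0)
  set Qₗ : Z₁ →ₗ[ℂ] Z₃ := (β.comp α).toLinearMap with hQₗ
  set φₗ : Z₁ →ₗ[ℂ] F := (T.comp α).toLinearMap with hφₗ
  have hker : LinearMap.ker Qₗ ≤ LinearMap.ker φₗ := by
    intro z hz
    have hz' : β (α z) = 0 := hz
    have h1 : ‖α z‖ ≤ 0 := by simpa [hz'] using hdom z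
    have hαz : α z = 0 := by
      simpa using le_antisymm h1 (norm_nonneg _)
    show T (α z) = 0
    simp [hαz]
  let ψ : LinearMap.range Qₗ →ₗ[ℂ] F :=
    ((LinearMap.ker Qₗ).liftQ φₗ hker).comp Qₗ.quotKerEquivRange.symm.toLinearMap
  have hψ : ∀ z : Z₁, ψ ⟨Qₗ z, LinearMap.mem_range_self _ z⟩ = T (α z) := by
    intro z
    have h1 : Qₗ.quotKerEquivRange.symm ⟨Qₗ z, LinearMap.mem_range_self _ z⟩
        = (LinearMap.ker Qₗ).mkQ z := Qₗ.quotKerEquivRange_symm_apply_image z _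
    simp only [ψ, LinearMap.comp_apply, LinearEquiv.coe_coe, h1]
    rfl
  have hψbound : ∀ x : LinearMap.range Qₗ, ‖ψ x‖ ≤ C * ‖x‖ := by
    rintro ⟨-, z, rfl⟩
    rw [hψ z]
    calc ‖T (α z)‖ ≤ ‖T‖ * ‖α z‖ := T.le_opNorm _
      _ ≤ 1 * ‖α z‖ := by gcongr
      _ = ‖α z‖ := one_mul _
      _ ≤ C * ‖β (α z)‖ := hdom z
      _ = C * ‖(⟨Qₗ z, LinearMap.mem_range_self _ z⟩ : LinearMap.range Qₗ)‖ := rfl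
  let ψc : LinearMap.range Qₗ →L[ℂ] F := ψ.mkContinuous C hψbound
  have hψcnorm : ‖ψc‖ ≤ C := ψ.mkContinuous_norm_le hC.le hψbound
  -- the functionals on the range, extended by Hahn-Banach
  let gfun : ℕ → (LinearMap.range Qₗ →L[ℂ] ℂ) := fun j => (innerSL ℂ (e j)).comp ψc
  have hgfun : ∀ j, ‖gfun j‖ ≤ C * C₁ := by
    intro j
    calc ‖gfun j‖ ≤ ‖innerSL ℂ (e j)‖ * ‖ψc‖ := ContinuousLinearMap.opNorm_comp_le _ _
      _ ≤ C₁ * C := by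
          apply mul_le_mul _ hψcnorm (norm_nonneg ψc) hC₁0
          exact le_trans (innerSL_apply_norm (𝕜 := ℂ) (e j)).le (hC₁ j)
      _ = C * C₁ := mul_comm _ _
  choose g hg hgnorm using fun j => exists_extension_norm_eq (𝕜 := ℂ) _ (gfun j)
  have hgle : ∀ j, ‖g j‖ ≤ C * C₁ := fun j => (hgnorm j).le.trans (hgfun j)
  -- the operator S as a sum of rank-one operators
  have hle : ∀ j, ‖(g j).smulRight (f j)‖ ≤ (C * C₁) * ‖f j‖ := by
    intro j
    rw [ContinuousLinearMap.norm_smulRight_apply]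
    exact mul_le_mul_of_nonneg_right (hgle j) (norm_nonneg _)
  have hSnorm : Summable fun j => ‖(g j).smulRight (f j)‖ :=
    Summable.of_nonneg_of_le (fun j => norm_nonneg _) hle (hC₂.summable.mul_left _)
  have hSsum : Summable fun j => (g j).smulRight (f j) := hSnorm.of_norm
  refine ⟨∑' j, (g j).smulRight (f j), ?_, ?_⟩
  · calc ‖∑' j, (g j).smulRight (f j)‖ ≤ ∑' j, ‖(g j).smulRight (f j)‖ :=
          norm_tsum_le_tsum_norm hSnorm
      _ ≤ ∑' j, (C * C₁) * ‖f j‖ :=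
          Summable.tsum_le_tsum hle hSnorm (hC₂.summable.mul_left _)
      _ = (C * C₁) * ∑' j, ‖f j‖ := tsum_mul_left
      _ = C * C₁ * C₂ := by rw [hC₂.tsum_eq]
  · intro z
    have h1 : HasSum (fun j => ((g j).smulRight (f j)) (β (α z)))
        ((∑' j, (g j).smulRight (f j)) (β (α z))) :=
      hasSum_clm_apply_aux _ _ hSsum.hasSum (β (α z))
    have h2 : ∀ j, ((g j).smulRight (f j)) (β (α z))
        = (inner ℂ (e j) (T (α z)) : ℂ) • f j := by
      intro j
      have hx : (β (α z)) = ((⟨Qₗ z, LinearMap.mem_range_self _ z⟩ :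
          LinearMap.range Qₗ) : Z₃) := rfl
      have : g j (β (α z)) = (inner ℂ (e j) (T (α z)) : ℂ) := by
        rw [hx, hg j]
        show (inner ℂ (e j) (ψc ⟨Qₗ z, _⟩) : ℂ) = _
        have : ψc ⟨Qₗ z, LinearMap.mem_range_self _ z⟩ = T (α z) := hψ z
        rw [this]
      simp [ContinuousLinearMap.smulRight_apply, this]
    rw [funext h2] at h1
    exact h1.unique (hη (T (α z)))
end

section
/- Let E be a Hausdorff locally convex topological vector space over ℂ containing a nonzero economy vector (i.e., some x ∈ E with x ≠ 0), equipped with an increasing sequence (B_N)_{N∈ℕ} of closed, absolutely convex, bounded subsets that is fundamental, and let (Z_n)_{n∈ℕ} be an inductive spectrum of Banach spaces. If the pair (E,(Z_n)) satisfies condition (S), then (Z_n) satisfies condition (Q). -/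
open Pointwise

/-- If (E, (Z n)) satisfies (S) (with E containing a nonzero vector),
then (Z n) satisfies (Q). -/
theorem stmt11 {E : Type*} [AddCommGroup E] [Module ℂ E] [TopologicalSpace E]
    [IsTopologicalAddGroup E] [ContinuousSMul ℂ E] [LocallyConvexSpace ℝ E] [T2Space E]
    (hE : ∃ x : E, x ≠ 0)
    (B : ℕ → Set E)
    (hBclosed : ∀ N, IsClosed (B N))
    (hBconvex : ∀ N, Convex ℝ (B N))
    (hBbalanced : ∀ N, Balanced ℂ (B N))
    (hBbounded : ∀ N, Bornology.IsVonNBounded ℂ (B N))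
    (hBmono : Monotone B)
    (hBfund : ∀ S : Set E, Bornology.IsVonNBounded ℂ S → ∃ N, S ⊆ B N)
    {Z : ℕ → Type*} [∀ n, NormedAddCommGroup (Z n)] [∀ n, NormedSpace ℂ (Z n)]
    [∀ n, CompleteSpace (Z n)]
    (j : ∀ n m : ℕ, n ≤ m → (Z n →L[ℂ] Z m))
    (hj_id : ∀ n, j n n le_rfl = ContinuousLinearMap.id ℂ (Z n))
    (hj_comp : ∀ n m k (hnm : n ≤ m) (hmk : m ≤ k) (z : Z n),
      j m k hmk (j n m hnm z) = j n k (hnm.trans hmk) z)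
    (hj_inj : ∀ n m (hnm : n ≤ m), Function.Injective (j n m hnm)) :
    PairCondS B j → SpectrumCondQ j := by
  intro hS n
  obtain ⟨m, hnm, hm⟩ := hS n
  refine ⟨m, hnm, ?_⟩
  intro k hmk ε hε
  obtain ⟨N, hN⟩ := hm k hmk
  obtain ⟨x, hx⟩ := hE
  haveI : ContinuousSMul ℝ E := ⟨by
    have h : Continuous fun p : ℝ × E => ((p.1 : ℂ)) • p.2 :=
      (Complex.continuous_ofReal.comp continuous_fst).smul continuous_snd
    simpa [Complex.coe_smul] using h⟩
  obtain ⟨f, hfx⟩ := SeparatingDual.exists_eq_one (R := ℝ) hx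
  -- bound for f on B N
  obtain ⟨D, hD⟩ := (NormedSpace.isVonNBounded_iff' ℝ).1
    (((hBbounded N).restrict_scalars ℝ).image f)
  set D' : ℝ := max D 1 with hD'def
  have hD'pos : 0 < D' := lt_of_lt_of_le one_pos (le_max_right _ _)
  have hD'bound : ∀ y ∈ B N, f y ≤ D' := fun y hy =>
    le_trans (le_abs_self _) (le_trans (hD _ ⟨y, hy, rfl⟩) (le_max_left _ _))
  -- x lies in some B N₀
  obtain ⟨N₀, hN₀⟩ := hBfund {x} (Bornology.isVonNBounded_singleton x)
  set M : ℕ := max N N₀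
  have hxM : x ∈ B M := hBmono (le_max_right N N₀) (hN₀ rfl)
  obtain ⟨K, hMK, C, hC, hsub⟩ := hN M (le_max_left N N₀) (ε / D') (div_pos hε hD'pos)
  -- bound for f on B K
  obtain ⟨DK, hDK⟩ := (NormedSpace.isVonNBounded_iff' ℝ).1
    (((hBbounded K).restrict_scalars ℝ).image f)
  set DK' : ℝ := max DK 1 with hDK'def
  have hDK'pos : 0 < DK' := lt_of_lt_of_le one_pos (le_max_right _ _)
  have hDK'bound : ∀ y ∈ B K, f y ≤ DK' := fun y hy =>
    le_trans (le_abs_self _) (le_trans (hDK _ ⟨y, hy, rfl⟩) (le_max_left _ _))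
  refine ⟨C * DK', mul_pos hC hDK'pos, fun z => ?_⟩
  have hmem : ‖j n m hnm z‖ • x ∈ ‖j n m hnm z‖ • B M :=
    Set.smul_mem_smul_set hxM
  have hmem2 := hsub z hmem
  obtain ⟨a, ha, b, hb, hab⟩ := Set.mem_add.1 hmem2
  obtain ⟨y₁, hy₁, rfl⟩ := ha
  obtain ⟨y₂, hy₂, rfl⟩ := hb
  have hfeq : ‖j n m hnm z‖ =
      (C * ‖j n k (hnm.trans hmk) z‖) * f y₁ + (ε / D' * ‖z‖) * f y₂ := by
    have := congrArg f hab
    simpa [map_add, map_smul, hfx] using this.symm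
  have h1 : (C * ‖j n k (hnm.trans hmk) z‖) * f y₁ ≤
      (C * ‖j n k (hnm.trans hmk) z‖) * DK' :=
    mul_le_mul_of_nonneg_left (hDK'bound _ hy₁)
      (mul_nonneg hC.le (norm_nonneg _))
  have h2 : (ε / D' * ‖z‖) * f y₂ ≤ (ε / D' * ‖z‖) * D' :=
    mul_le_mul_of_nonneg_left (hD'bound _ hy₂)
      (mul_nonneg (div_pos hε hD'pos).le (norm_nonneg _))
  have h3 : (ε / D' * ‖z‖) * D' = ε * ‖z‖ := by
    field_simp
  calc ‖j n m hnm z‖ = (C * ‖j n k (hnm.trans hmk) z‖) * f y₁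
        + (ε / D' * ‖z‖) * f y₂ := hfeq
    _ ≤ (C * ‖j n k (hnm.trans hmk) z‖) * DK' + (ε / D' * ‖z‖) * D' :=
        add_le_add h1 h2
    _ = (C * DK') * ‖j n k (hnm.trans hmk) z‖ + ε * ‖z‖ := by rw [h3]; ring
end

section
/- Let E be a Hausdorff locally convex topological vector space over ℂ equipped with an increasing sequence (B_N)_{N∈ℕ} of closed, absolutely convex, bounded subsets that is fundamental, and let (Z_n)_{n∈ℕ} be an inductive spectrum of Banach spaces. Suppose E does not possess a fundamental bounded set. If the pair (E,(Z_n)) satisfies condition (WS), then (Z_n) satisfies condition (Q). -/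
open Pointwise

/-- In a balanced set over ℂ, shrinking the (real, nonnegative) scaling factor keeps
membership in the scaled set. -/
lemma balanced_smul_mem {E : Type*} [AddCommGroup E] [Module ℂ E]
    {s : Set E} (hs : Balanced ℂ s) {x : E} (hx : x ∈ s) {a b : ℝ}
    (ha : 0 ≤ a) (hab : a ≤ b) (hb : 0 < b) : a • x ∈ b • s := by
  have hmem : ((a / b : ℝ) : ℂ) • x ∈ s := by
    apply hs ((a / b : ℝ) : ℂ) ?_ (Set.smul_mem_smul_set hx)
    rw [Complex.norm_real]
    rw [Real.norm_eq_abs, abs_of_nonneg (div_nonneg ha hb.le)]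
    exact div_le_one_of_le₀ hab hb.le
  rw [Complex.coe_smul] at hmem
  refine ⟨(a / b) • x, hmem, ?_⟩
  show b • (a / b) • x = a • x
  rw [smul_smul, mul_div_cancel₀ _ hb.ne']

/-- A von Neumann bounded set can be shrunk (by a positive real factor) into any
neighbourhood of zero. -/
lemma bounded_smul_subset {E : Type*} [AddCommGroup E] [Module ℂ E] [TopologicalSpace E]
    {s W : Set E} (hs : Bornology.IsVonNBounded ℂ s) (hW : W ∈ nhds (0 : E)) :
    ∃ δ : ℝ, 0 < δ ∧ δ • s ⊆ W := by
  obtain ⟨r, hr, habs⟩ := (hs hW).exists_pos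
  have hsub : s ⊆ (r : ℂ) • W := habs (r : ℂ) (by
    rw [Complex.norm_real, Real.norm_eq_abs, abs_of_pos hr])
  refine ⟨r⁻¹, inv_pos.mpr hr, ?_⟩
  rintro _ ⟨z, hz, rfl⟩
  obtain ⟨w, hw, rfl⟩ := hsub hz
  have : (r⁻¹ : ℝ) • (r : ℂ) • w = w := by
    rw [← Complex.coe_smul, smul_smul]
    norm_cast
    rw [inv_mul_cancel₀ hr.ne']
    simp
  show (r⁻¹ : ℝ) • (r : ℂ) • w ∈ W
  rwa [this]

/-- If E has no fundamental bounded set and (E, (Z n)) satisfies (WS),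
then (Z n) satisfies (Q). -/
theorem stmt13 {E : Type*} [AddCommGroup E] [Module ℂ E] [TopologicalSpace E]
    [IsTopologicalAddGroup E] [ContinuousSMul ℂ E] [LocallyConvexSpace ℝ E] [T2Space E]
    (B : ℕ → Set E)
    (hBclosed : ∀ N, IsClosed (B N))
    (hBconvex : ∀ N, Convex ℝ (B N))
    (hBbalanced : ∀ N, Balanced ℂ (B N))
    (hBbounded : ∀ N, Bornology.IsVonNBounded ℂ (B N))
    (hBmono : Monotone B)
    (hBfund : ∀ S : Set E, Bornology.IsVonNBounded ℂ S → ∃ N, S ⊆ B N)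
    (hno_fund_bdd : ¬ ∃ B₀ : Set E, Bornology.IsVonNBounded ℂ B₀ ∧
      ∀ S : Set E, Bornology.IsVonNBounded ℂ S → ∃ C : ℝ, 0 < C ∧ S ⊆ C • B₀)
    {Z : ℕ → Type*} [∀ n, NormedAddCommGroup (Z n)] [∀ n, NormedSpace ℂ (Z n)]
    [∀ n, CompleteSpace (Z n)]
    (j : ∀ n m : ℕ, n ≤ m → (Z n →L[ℂ] Z m))
    (hj_id : ∀ n, j n n le_rfl = ContinuousLinearMap.id ℂ (Z n))
    (hj_comp : ∀ n m k (hnm : n ≤ m) (hmk : m ≤ k) (z : Z n),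
      j m k hmk (j n m hnm z) = j n k (hnm.trans hmk) z)
    (hj_inj : ∀ n m (hnm : n ≤ m), Function.Injective (j n m hnm)) :
    PairCondWS B j → SpectrumCondQ j := by
  intro hWS n
  obtain ⟨m, hnm, hm⟩ := hWS n
  refine ⟨m, hnm, ?_⟩
  intro k hmk ε hε
  by_contra hcon
  push_neg at hcon
  obtain ⟨N, hN⟩ := hm k hmk
  -- find M ≥ N with B M not absorbed by B N
  have hMex : ∃ M, N ≤ M ∧ ∀ c : ℝ, 0 < c → ¬ B M ⊆ c • B N := by
    by_contra h
    push_neg at h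
    apply hno_fund_bdd
    refine ⟨B N, hBbounded N, fun S hS => ?_⟩
    obtain ⟨M₀, hM₀⟩ := hBfund S hS
    obtain ⟨c, hc, hsub⟩ := h (max M₀ N) (le_max_right _ _)
    exact ⟨c, hc, (hM₀.trans (hBmono (le_max_left _ _))).trans hsub⟩
  obtain ⟨M, hNM, hMnot⟩ := hMex
  obtain ⟨K, hMK, C, hC, hWSincl⟩ := hN M hNM
  have hcpos : 0 < C / ε := div_pos hC hε
  set c : ℝ := C / ε with hcdef
  refine hMnot c hcpos (fun x hx => ?_)
  have key : c⁻¹ • x ∈ B N := by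
    have hclos : c⁻¹ • x ∈ closure (B N) := by
      rw [mem_closure_iff_nhds]
      intro t ht
      have hcont : Continuous (fun u : E => c⁻¹ • x - u) :=
        continuous_const.sub continuous_id
      have hW : (fun u : E => c⁻¹ • x - u) ⁻¹' t ∈ nhds (0 : E) :=
        hcont.continuousAt.preimage_mem_nhds (by simpa using ht)
      obtain ⟨δ, hδ, hδsub⟩ := bounded_smul_subset (hBbounded K) hW
      obtain ⟨z, hz⟩ := hcon (C / (c * δ)) (div_pos hC (mul_pos hcpos hδ))
      set nm := ‖j n m hnm z‖ with hnmdef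
      set nk := ‖j n k (hnm.trans hmk) z‖ with hnkdef
      set nz := ‖z‖ with hnzdef
      have hnm0 : 0 < nm := lt_of_le_of_lt (by positivity) hz
      obtain ⟨w, hw, hweq⟩ := hWSincl z (Set.smul_mem_smul_set hx)
      obtain ⟨u, hu, v, hv, rfl⟩ := hw
      obtain ⟨p, hp, rfl⟩ := hu
      obtain ⟨q, hq, rfl⟩ := hv
      have hweq' : C • (nk • p + nz • q) = nm • x := hweq
      set a : ℝ := c⁻¹ * nm⁻¹ * (C * nk) with hadef
      set b : ℝ := c⁻¹ * nm⁻¹ * (C * nz) with hbdef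
      have hxeq : c⁻¹ • x = a • p + b • q := by
        have h1 : (c⁻¹ * nm⁻¹) • (C • (nk • p + nz • q)) = c⁻¹ • x := by
          rw [hweq', smul_smul]
          congr 1
          field_simp
        rw [← h1]
        simp only [hadef, hbdef, smul_add, smul_smul]
      have h2 : C / (c * δ) * nk ≤ nm :=
        le_of_lt (lt_of_le_of_lt (le_add_of_nonneg_right (by positivity)) hz)
      have ha : a ≤ δ := by
        rw [div_mul_eq_mul_div, div_le_iff₀ (mul_pos hcpos hδ)] at h2
        calc a = c⁻¹ * nm⁻¹ * (C * nk) := hadef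
          _ ≤ c⁻¹ * nm⁻¹ * (nm * (c * δ)) :=
            mul_le_mul_of_nonneg_left h2 (by positivity)
          _ = δ := by field_simp
      have h3 : ε * nz ≤ nm :=
        le_of_lt (lt_of_le_of_lt (le_add_of_nonneg_left (by positivity)) hz)
      have hb : b ≤ 1 := by
        have hbeq : b = (ε * nz) / nm := by
          rw [hbdef, hcdef]
          field_simp
        rw [hbeq, div_le_one hnm0]
        exact h3
      have hap : a • p ∈ (fun u : E => c⁻¹ • x - u) ⁻¹' t :=
        hδsub (balanced_smul_mem (hBbalanced K) hp (by positivity) ha hδ)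
      have hbq : b • q ∈ B N := by
        have := balanced_smul_mem (hBbalanced N) hq (by positivity) hb one_pos
        rwa [one_smul] at this
      refine ⟨b • q, ?_, hbq⟩
      have : c⁻¹ • x - a • p = b • q := by rw [hxeq]; abel
      have hmem : c⁻¹ • x - a • p ∈ t := hap
      rwa [this] at hmem
    rwa [(hBclosed N).closure_eq] at hclos
  exact ⟨c⁻¹ • x, key, by show c • c⁻¹ • x = x; rw [smul_inv_smul₀ hcpos.ne']⟩
end

section
/- Let V be a complex vector space, let p₀, p₁, p₂ be seminorms on V, and let C, ε > 0 be such that p₁(x) ≤ C·p₂(x) + ε·p₀(x) for all x ∈ V. Then every ℂ-linear functional f : V → ℂ with |f(x)| ≤ p₁(x) for all x ∈ V can be written as f = g + h, where g, h : V → ℂ are ℂ-linear functionals with |g(x)| ≤ 2C·p₂(x) and |h(x)| ≤ 2ε·p₀(x) for all x ∈ V. -/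
open Complex

theorem aux_hb {W : Type*} [AddCommGroup W] [Module ℂ W]
    (N : W → ℝ) (N_smul : ∀ (c : ℂ) (w : W), N (c • w) = ‖c‖ * N w)
    (N_add : ∀ w₁ w₂, N (w₁ + w₂) ≤ N w₁ + N w₂)
    (D : Submodule ℂ W) (f : D →ₗ[ℂ] ℂ) (hf : ∀ x : D, ‖f x‖ ≤ N x) :
    ∃ F : W →ₗ[ℂ] ℂ, (∀ x : D, F x = f x) ∧ ∀ w, ‖F w‖ ≤ N w := by
  have hN0 : ∀ w, 0 ≤ N w := by
    intro w
    have h1 : N ((-1 : ℂ) • w) = N w := by rw [N_smul]; simp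
    have h2 := N_add w ((-1 : ℂ) • w)
    have h3 : N (w + (-1 : ℂ) • w) = 0 := by
      have : w + (-1 : ℂ) • w = (0 : ℂ) • w := by
        simp [neg_smul]
      rw [this, N_smul]; simp
    linarith
  -- the real subspace and real functional
  set Dr : Submodule ℝ W := D.restrictScalars ℝ with hDr
  let fr : Dr →ₗ[ℝ] ℝ :=
    Complex.reLm ∘ₗ (f.restrictScalars ℝ)
  have hfr : ∀ x : Dr, fr x ≤ N x := by
    intro x
    calc fr x = (f x).re := rfl
    _ ≤ ‖f x‖ := Complex.re_le_norm _
    _ ≤ N x := hf x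
  have N_hom : ∀ c : ℝ, 0 < c → ∀ w, N (c • w) = c * N w := by
    intro c hc w
    have : c • w = (c : ℂ) • w := (algebraMap_smul ℂ c w).symm
    rw [this, N_smul]
    simp [abs_of_pos hc]
  obtain ⟨G, hGext, hGle⟩ :=
    exists_extension_of_le_sublinear ⟨Dr, fr⟩ N N_hom N_add hfr
  have hGabs : ∀ w, |G w| ≤ N w := by
    intro w
    rcases abs_cases (G w) with ⟨h, _⟩ | ⟨h, _⟩
    · rw [h]; exact hGle w
    · rw [h]
      have := hGle (-w)
      have hNw : N (-w) = N w := by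
        have : (-w) = (-1 : ℂ) • w := by simp
        rw [this, N_smul]; simp
      simp only [map_neg] at this
      linarith [hNw ▸ this]
  -- complexify
  refine ⟨G.extendTo𝕜', ?_, ?_⟩
  · intro x
    have hI : (RCLike.I : ℂ) = Complex.I := rfl
    have hx1 : G x = (f x).re := hGext x
    have hmem : Complex.I • (x : W) ∈ Dr := D.smul_mem Complex.I x.2
    have hx2 : G (Complex.I • (x : W)) = (f (Complex.I • x)).re := by
      have h := hGext ⟨Complex.I • (x : W), hmem⟩
      have h2 : (⟨Complex.I • (x : W), hmem⟩ : Dr) = (Complex.I • x : D) := rfl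
      rw [h2] at h
      exact h
    rw [LinearMap.extendTo𝕜', LinearMap.extendTo𝕜'_apply, hx1, hI, hx2, map_smul, smul_eq_mul]
    simp [Complex.ext_iff, Complex.mul_re, Complex.mul_im]
  · intro w
    set F : W →ₗ[ℂ] ℂ := G.extendTo𝕜' with hF
    by_cases h : F w = 0
    · rw [h, norm_zero]; exact hN0 w
    · have hsq := G.norm_extendTo𝕜'_apply_sq (𝕜 := ℂ) w
      have hb : ‖F w‖ ^ 2 ≤ ‖F w‖ * N w := by
        calc ‖F w‖ ^ 2 = G ((starRingEnd ℂ) (F w) • w) := hsq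
        _ ≤ |G ((starRingEnd ℂ) (F w) • w)| := le_abs_self _
        _ ≤ N ((starRingEnd ℂ) (F w) • w) := hGabs _
        _ = ‖F w‖ * N w := by rw [N_smul]; simp
      have hpos : 0 < ‖F w‖ := norm_pos_iff.2 h
      nlinarith

/-- Decomposition of a linear functional dominated by `C • p₂ + ε • p₀` into a sum of
functionals dominated by `2C • p₂` and `2ε • p₀` respectively. -/
theorem stmt14 {V : Type*} [AddCommGroup V] [Module ℂ V]
    (p₀ p₁ p₂ : Seminorm ℂ V)
    (C ε : ℝ) (hC : 0 < C) (hε : 0 < ε)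
    (hdom : ∀ x : V, p₁ x ≤ C * p₂ x + ε * p₀ x)
    (f : V →ₗ[ℂ] ℂ) (hf : ∀ x : V, ‖f x‖ ≤ p₁ x) :
    ∃ g h : V →ₗ[ℂ] ℂ, f = g + h ∧
      (∀ x : V, ‖g x‖ ≤ 2 * C * p₂ x) ∧
      (∀ x : V, ‖h x‖ ≤ 2 * ε * p₀ x) := by
  set N : V × V → ℝ := fun w => C * p₂ w.1 + ε * p₀ w.2 with hN
  have N_smul : ∀ (c : ℂ) (w : V × V), N (c • w) = ‖c‖ * N w := by
    intro c w
    simp only [hN, Prod.smul_fst, Prod.smul_snd, map_smul_eq_mul]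
    ring
  have N_add : ∀ w₁ w₂, N (w₁ + w₂) ≤ N w₁ + N w₂ := by
    intro w₁ w₂
    simp only [hN, Prod.fst_add, Prod.snd_add]
    have h1 := map_add_le_add p₂ w₁.1 w₂.1
    have h2 := map_add_le_add p₀ w₁.2 w₂.2
    nlinarith
  set D : Submodule ℂ (V × V) :=
    LinearMap.range (LinearMap.prod LinearMap.id LinearMap.id : V →ₗ[ℂ] V × V) with hD
  set fD : D →ₗ[ℂ] ℂ := f ∘ₗ LinearMap.fst ℂ V V ∘ₗ D.subtype with hfD
  have hfDb : ∀ x : D, ‖fD x‖ ≤ N x := by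
    rintro ⟨w, v, rfl⟩
    simp only [hfD, LinearMap.comp_apply, Submodule.subtype_apply, LinearMap.fst_apply,
      LinearMap.prod_apply, Pi.prod, LinearMap.id_apply, hN]
    exact (hf v).trans (hdom v)
  obtain ⟨F, hFext, hFle⟩ := aux_hb N N_smul N_add D fD hfDb
  refine ⟨F ∘ₗ LinearMap.inl ℂ V V, F ∘ₗ LinearMap.inr ℂ V V, ?_, ?_, ?_⟩
  · ext v
    have hmem : ((v, v) : V × V) ∈ D := ⟨v, rfl⟩
    have h1 : F (v, v) = f v := by
      have := hFext ⟨(v, v), hmem⟩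
      simpa [hfD] using this
    have h2 : ((v, (0 : V)) : V × V) + ((0 : V), v) = (v, v) := by simp
    simp only [LinearMap.add_apply, LinearMap.comp_apply, LinearMap.inl_apply,
      LinearMap.inr_apply]
    rw [← map_add, h2, h1]
  · intro x
    have := hFle (x, 0)
    simp only [hN, map_zero, mul_zero, add_zero] at this
    simp only [LinearMap.comp_apply, LinearMap.inl_apply]
    nlinarith [apply_nonneg p₂ x]
  · intro x
    have := hFle (0, x)
    simp only [hN, map_zero, mul_zero, zero_add] at this
    simp only [LinearMap.comp_apply, LinearMap.inr_apply]
    nlinarith [apply_nonneg p₀ x]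
end
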